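/- arXiv:1112.1538 — 9 statements merged into one kernel-verified Lean document; each statement's English description precedes it below -/
import Mathlib

section
/- Let (A_j,B_j), (A_{j+1},B_{j+1}) be separations of a digraph T with A_j ⊆ A_{j+1} and B_{j+1} ⊆ B_j, and let (C,D) be a separation with A_j ⊆ C ⊆ A_{j+1} and B_{j+1} ⊆ D ⊆ B_j. Let (A_r,B_r) be a separation with A_r ⊆ A_j and B_j ⊆ B_r that is not k-close to (A_j,B_j). If (C,D) is not k-close to (A_j,B_j), then (C,D) is not k-close to (A_r,B_r). -/
/-- A separation of a finite digraph, with `Finset` sides. -/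
def IsSeparationF {V : Type*} [Fintype V] [DecidableEq V]
    (E : V → V → Prop) (A B : Finset V) : Prop :=
  A ∪ B = Finset.univ ∧ ∀ u ∈ A \ B, ∀ v ∈ B \ A, ¬ E u v

/-- Two non-crossing separations `(A,B)` and `(C,D)` with `A ⊆ C` and `D ⊆ B`,
of orders `i = |A ∩ B|` and `j = |C ∩ D|`, are `k`-close if
`|(B \ A) ∩ (C \ D)| < k·|i − j|`. -/
def KClose {V : Type*} [Fintype V] [DecidableEq V] (k : ℕ) (A B C D : Finset V) : Prop :=
  (((B \ A) ∩ (C \ D)).card : ℤ) <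
    (k : ℤ) * |((A ∩ B).card : ℤ) - ((C ∩ D).card : ℤ)|

/-! Non-closeness is transitive along a chain `(A,B) ⊑ (C,D) ⊑ (E,F)`: the gaps of the two
steps are disjoint parts of the gap of the whole, while the order difference of the whole is at
most the sum of those of the steps, by the triangle inequality. -/

section

variable {V : Type*} [DecidableEq V]

theorem card_gap_add_card_gap_le {A B C D E F : Finset V}
    (hAC : A ⊆ C) (hDB : D ⊆ B) (hCE : C ⊆ E) (hFD : F ⊆ D) :
    ((B \ A) ∩ (C \ D)).card + ((D \ C) ∩ (E \ F)).card ≤ ((B \ A) ∩ (E \ F)).card := by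
  have hdisj : Disjoint ((B \ A) ∩ (C \ D)) ((D \ C) ∩ (E \ F)) := by
    rw [Finset.disjoint_left]
    intro x hx hy
    simp only [Finset.mem_inter, Finset.mem_sdiff] at hx hy
    exact hx.2.2 hy.1.1
  rw [← Finset.card_union_of_disjoint hdisj]
  refine Finset.card_le_card (Finset.union_subset ?_ ?_) <;> intro x hx <;>
    simp only [Finset.mem_inter, Finset.mem_sdiff] at hx ⊢
  · exact ⟨hx.1, hCE hx.2.1, fun h => hx.2.2 (hFD h)⟩
  · exact ⟨⟨hDB hx.1.1, fun h => hx.1.2 (hAC h)⟩, hx.2⟩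

theorem not_kClose_trans [Fintype V] {k : ℕ} {A B C D E F : Finset V}
    (hAC : A ⊆ C) (hDB : D ⊆ B) (hCE : C ⊆ E) (hFD : F ⊆ D)
    (h₁ : ¬ KClose k A B C D) (h₂ : ¬ KClose k C D E F) : ¬ KClose k A B E F := by
  simp only [KClose, not_lt] at h₁ h₂ ⊢
  calc (k : ℤ) * |((A ∩ B).card : ℤ) - (E ∩ F).card|
      ≤ k * (|((A ∩ B).card : ℤ) - (C ∩ D).card| + |((C ∩ D).card : ℤ) - (E ∩ F).card|) := by
        gcongr
        exact abs_sub_le _ _ _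
    _ ≤ ((B \ A) ∩ (C \ D)).card + ((D \ C) ∩ (E \ F)).card := by
        rw [mul_add]
        exact add_le_add h₁ h₂
    _ ≤ ((B \ A) ∩ (E \ F)).card := by
        exact_mod_cast card_gap_add_card_gap_le hAC hDB hCE hFD

end

theorem stmt_4_general {V : Type*} [Fintype V] [DecidableEq V] (k : ℕ)
    (Aj Bj C D Ar Br : Finset V)
    (hC1 : Aj ⊆ C)
    (hD2 : D ⊆ Bj)
    (hr1 : Ar ⊆ Aj) (hr2 : Bj ⊆ Br)
    (hnotr : ¬ KClose k Ar Br Aj Bj)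
    (hnotC : ¬ KClose k Aj Bj C D) :
    ¬ KClose k Ar Br C D :=
  not_kClose_trans hr1 hr2 hC1 hD2 hnotr hnotC

/-- with `(A_j,B_j) ⊑ (C,D) ⊑ (A_{j+1},B_{j+1})` and `(A_r,B_r) ⊑ (A_j,B_j)`
not k-close to `(A_j,B_j)`, if `(C,D)` is not k-close to `(A_j,B_j)` then `(C,D)` is not
k-close to `(A_r,B_r)`. -/
theorem stmt_4 {V : Type*} [Fintype V] [DecidableEq V] (E : V → V → Prop) (k : ℕ)
    (Aj Bj Aj1 Bj1 C D Ar Br : Finset V)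
    (hsepj : IsSeparationF E Aj Bj)
    (hsepj1 : IsSeparationF E Aj1 Bj1)
    (hsepCD : IsSeparationF E C D)
    (hsepr : IsSeparationF E Ar Br)
    (hAj : Aj ⊆ Aj1) (hBj : Bj1 ⊆ Bj)
    (hC1 : Aj ⊆ C) (hC2 : C ⊆ Aj1)
    (hD1 : Bj1 ⊆ D) (hD2 : D ⊆ Bj)
    (hr1 : Ar ⊆ Aj) (hr2 : Bj ⊆ Br)
    (hnotr : ¬ KClose k Ar Br Aj Bj)
    (hnotC : ¬ KClose k Aj Bj C D) :
    ¬ KClose k Ar Br C D :=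
  stmt_4_general k Aj Bj C D Ar Br hC1 hD2 hr1 hr2 hnotr hnotC
end

section
/- For every digraph D, the pathwidth of D is at most twice its cutwidth: pw(D) ≤ 2·ctw(D). -/
/-!
Take a vertex ordering `v_1, …, v_n` of optimal cutwidth `c`. For each position `ℓ` form the
bag consisting of `v_ℓ` and the endpoints of the at most `c` back arcs across the cut after `ℓ`;
it has at most `2c + 1` vertices. A vertex lies in the bags of an interval of positions around
its own, and every back arc `(v_j, v_i)` lies in the bag at position `i`. Listing the bags in
reverse order puts the tail of every forward arc in a later bag than its head, so this is a
path decomposition of width at most `2c`.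
-/

/-- A path decomposition of a digraph `(V,E)`: a sequence of bags covering all vertices,
with the interpolation property, such that every arc `(u,v)` lies in a common bag or has
`u` in a strictly later bag than `v`. -/
def IsPathDecomp {V : Type*} (E : V → V → Prop) {r : ℕ} (W : Fin r → Set V) : Prop :=
  (∀ v, ∃ i, v ∈ W i) ∧
  (∀ i j k : Fin r, i ≤ j → j ≤ k → W i ∩ W k ⊆ W j) ∧
  (∀ u v, E u v → (∃ i, u ∈ W i ∧ v ∈ W i) ∨ ∃ i j : Fin r, j < i ∧ u ∈ W i ∧ v ∈ W j)

/-- The pathwidth of a digraph: the least `w` such that there is a path decomposition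
all of whose bags have size at most `w + 1`. -/
noncomputable def pathwidth {V : Type*} [Fintype V] (E : V → V → Prop) : ℕ :=
  sInf {w : ℕ | ∃ (r : ℕ) (W : Fin r → Set V),
    IsPathDecomp E W ∧ ∀ i, (W i).ncard ≤ w + 1}

/-- The cutwidth of a digraph: the least `c` such that some vertex ordering has, at
every cut position `ℓ`, at most `c` back arcs `(v_j, v_i)` with `i ≤ ℓ < j`. -/
noncomputable def cutwidth {V : Type*} [Fintype V] (E : V → V → Prop) : ℕ :=
  sInf {c : ℕ | ∃ e : Fin (Fintype.card V) ≃ V,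
    ∀ ℓ : Fin (Fintype.card V),
      {p : Fin (Fintype.card V) × Fin (Fintype.card V) |
        p.2 ≤ ℓ ∧ ℓ < p.1 ∧ E (e p.1) (e p.2)}.ncard ≤ c}

section CutBag

variable {V : Type*} (E : V → V → Prop) {n : ℕ} (e : Fin n ≃ V)

def backArcsAcross (ℓ : Fin n) : Set (Fin n × Fin n) :=
  {p | p.2 ≤ ℓ ∧ ℓ < p.1 ∧ E (e p.1) (e p.2)}

def cutBag (ℓ : Fin n) : Set V :=
  {e ℓ} ∪ (fun p => e p.1) '' backArcsAcross E e ℓ ∪ (fun p => e p.2) '' backArcsAcross E e ℓ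

theorem exists_equiv_ncard_backArcsAcross_le_cutwidth [Fintype V] :
    ∃ e : Fin (Fintype.card V) ≃ V, ∀ ℓ, (backArcsAcross E e ℓ).ncard ≤ cutwidth E := by
  have hne : {c | ∃ e : Fin (Fintype.card V) ≃ V,
      ∀ ℓ, (backArcsAcross E e ℓ).ncard ≤ c}.Nonempty :=
    ⟨_, (Fintype.equivFin V).symm, fun _ => Set.ncard_le_card _⟩
  exact Nat.sInf_mem hne

variable {E e}

theorem ncard_cutBag_le (ℓ : Fin n) :
    (cutBag E e ℓ).ncard ≤ 2 * (backArcsAcross E e ℓ).ncard + 1 := by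
  set A := backArcsAcross E e ℓ
  calc (cutBag E e ℓ).ncard
      ≤ ({e ℓ} : Set V).ncard + ((fun p => e p.1) '' A).ncard + ((fun p => e p.2) '' A).ncard :=
        (Set.ncard_union_le _ _).trans (by gcongr; exact Set.ncard_union_le _ _)
    _ ≤ 1 + A.ncard + A.ncard := by
        rw [Set.ncard_singleton]
        gcongr <;> exact Set.ncard_image_le (Set.toFinite A)
    _ = 2 * A.ncard + 1 := by ring

theorem self_mem_cutBag (ℓ : Fin n) : e ℓ ∈ cutBag E e ℓ :=
  Or.inl (Or.inl rfl)

theorem mem_cutBag_of_backArc {i j : Fin n} (hij : i < j) (hE : E (e j) (e i)) :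
    e j ∈ cutBag E e i ∧ e i ∈ cutBag E e i :=
  ⟨Or.inl (Or.inr ⟨(j, i), ⟨le_rfl, hij, hE⟩, rfl⟩), self_mem_cutBag i⟩

theorem mem_cutBag_of_symm_le_of_le {v : V} {ℓ ℓ' : Fin n} (hv : e.symm v ≤ ℓ) (hℓ : ℓ ≤ ℓ')
    (h : v ∈ cutBag E e ℓ') : v ∈ cutBag E e ℓ := by
  obtain (rfl | ⟨p, ⟨-, hp, -⟩, rfl⟩) | ⟨p, ⟨hp₂, hp₁, hE⟩, rfl⟩ := h <;>
    rw [Equiv.symm_apply_apply] at hv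
  · rw [le_antisymm hℓ hv]
    exact self_mem_cutBag _
  · exact absurd (hv.trans hℓ) hp.not_ge
  · exact Or.inr ⟨p, ⟨hv, hℓ.trans_lt hp₁, hE⟩, rfl⟩

theorem mem_cutBag_of_le_of_le_symm {v : V} {ℓ ℓ' : Fin n} (hℓ : ℓ' ≤ ℓ) (hv : ℓ ≤ e.symm v)
    (h : v ∈ cutBag E e ℓ') : v ∈ cutBag E e ℓ := by
  obtain (rfl | ⟨p, ⟨hp₂, hp₁, hE⟩, rfl⟩) | ⟨p, ⟨hp, -, -⟩, rfl⟩ := h <;>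
    rw [Equiv.symm_apply_apply] at hv
  · rw [← le_antisymm hv hℓ]
    exact self_mem_cutBag _
  · rcases hv.lt_or_eq with hlt | rfl
    · exact Or.inl (Or.inr ⟨p, ⟨hp₂.trans hℓ, hlt, hE⟩, rfl⟩)
    · exact self_mem_cutBag _
  · rw [le_antisymm hv (hp.trans hℓ)]
    exact self_mem_cutBag _

theorem cutBag_inter_subset {ℓ₁ ℓ ℓ₂ : Fin n} (h₁ : ℓ₁ ≤ ℓ) (h₂ : ℓ ≤ ℓ₂) :
    cutBag E e ℓ₁ ∩ cutBag E e ℓ₂ ⊆ cutBag E e ℓ := fun v ⟨hv₁, hv₂⟩ =>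
  (le_total (e.symm v) ℓ).elim (mem_cutBag_of_symm_le_of_le · h₂ hv₂)
    (mem_cutBag_of_le_of_le_symm h₁ · hv₁)

theorem isPathDecomp_cutBag_rev : IsPathDecomp E fun i => cutBag E e i.rev := by
  refine ⟨fun v => ⟨(e.symm v).rev, ?_⟩, fun i j k hij hjk => ?_, fun u v hE => ?_⟩
  · simpa using self_mem_cutBag (E := E) (e := e) (e.symm v)
  · rw [Set.inter_comm]
    exact cutBag_inter_subset (Fin.rev_le_rev.mpr hjk) (Fin.rev_le_rev.mpr hij)
  · obtain ⟨i, rfl⟩ := e.surjective u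
    obtain ⟨j, rfl⟩ := e.surjective v
    rcases lt_trichotomy i j with hij | rfl | hji
    · exact Or.inr ⟨i.rev, j.rev, Fin.rev_lt_rev.mpr hij, by simpa using self_mem_cutBag i,
        by simpa using self_mem_cutBag j⟩
    · exact Or.inl ⟨i.rev, by simpa using self_mem_cutBag i, by simpa using self_mem_cutBag i⟩
    · exact Or.inl ⟨j.rev, by simpa using mem_cutBag_of_backArc hji hE⟩

end CutBag

/-- For every digraph `D`, `pw(D) ≤ 2 · ctw(D)`. -/
theorem stmt_5 {V : Type*} [Fintype V] (E : V → V → Prop) :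
    pathwidth E ≤ 2 * cutwidth E := by
  obtain ⟨e, he⟩ := exists_equiv_ncard_backArcsAcross_le_cutwidth E
  refine Nat.sInf_le ⟨_, _, isPathDecomp_cutBag_rev (e := e), fun i => ?_⟩
  calc (cutBag E e i.rev).ncard ≤ 2 * (backArcsAcross E e i.rev).ncard + 1 := ncard_cutBag_le _
    _ ≤ 2 * cutwidth E + 1 := by gcongr; exact he _
end

section
/- For every semi-complete digraph T, the cliquewidth of T is at most its pathwidth plus two: cw(T) ≤ pw(T) + 2. -/
open scoped Classical

/-- `k`-expressions building a labeled digraph: introduce a labeled vertex, disjoint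
union, relabel, and join (add all arcs from label `i` to label `j`). -/
inductive CWExpr (k : ℕ) (V : Type u) : Type u where
  | intro : V → Fin k → CWExpr k V
  | union : CWExpr k V → CWExpr k V → CWExpr k V
  | relabel : Fin k → Fin k → CWExpr k V → CWExpr k V
  | join : Fin k → Fin k → CWExpr k V → CWExpr k V

namespace CWExpr

/-- Vertex set constructed by an expression. -/
def verts {k : ℕ} {V : Type u} : CWExpr k V → Set V
  | intro v _ => {v}
  | union a b => a.verts ∪ b.verts
  | relabel _ _ a => a.verts
  | join _ _ a => a.verts

/-- Labeling produced by an expression. -/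
noncomputable def label {k : ℕ} {V : Type u} : CWExpr k V → V → Fin k
  | intro _ i => fun _ => i
  | union a b => fun x => if x ∈ a.verts then a.label x else b.label x
  | relabel i j a => fun x => if a.label x = i then j else a.label x
  | join _ _ a => a.label

/-- Arc relation produced by an expression. -/
noncomputable def edges {k : ℕ} {V : Type u} : CWExpr k V → V → V → Prop
  | intro _ _ => fun _ _ => False
  | union a b => fun x y => a.edges x y ∨ b.edges x y
  | relabel _ _ a => a.edges
  | join i j a => fun x y => a.edges x y ∨
      (x ∈ a.verts ∧ y ∈ a.verts ∧ x ≠ y ∧ a.label x = i ∧ a.label y = j)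

/-- Well-formedness: unions are disjoint. -/
def wf {k : ℕ} {V : Type u} : CWExpr k V → Prop
  | intro _ _ => True
  | union a b => a.wf ∧ b.wf ∧ Disjoint a.verts b.verts
  | relabel _ _ a => a.wf
  | join _ _ a => a.wf

end CWExpr

/-- Cliquewidth of a digraph `(V, E)`: the least `k` for which some well-formed
`k`-expression constructs exactly the digraph. -/
noncomputable def cliquewidth (V : Type u) [Fintype V] (E : V → V → Prop) : ℕ :=
  sInf {k : ℕ | ∃ expr : CWExpr k V, expr.wf ∧ expr.verts = Set.univ ∧
    ∀ u v, expr.edges u v ↔ E u v}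

/-!
Take a path decomposition whose bags have at most `p + 1` vertices and add the vertices one by
one, in the order of their first bags. When a vertex `v` is added, every vertex whose last bag
precedes the first bag of `v` carries label `0`; each of the others carries a label of its own,
and since all of these lie, together with `v`, in the first bag of `v`, one of the `p + 1`
nonzero labels is free for `v`. A vertex labelled `0` has no arc to `v` (all its bags come
before those of `v`), so by semi-completeness `v` has an arc to it: one join from the label of
`v` to `0` creates all these arcs, and the arcs between `v` and the other vertices are added by
joins of two private labels.
-/

namespace CWExpr

variable {k : ℕ} {V : Type*}

lemma verts_nonempty (e : CWExpr k V) : e.verts.Nonempty := by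
  induction e with
  | intro v _ => exact ⟨v, rfl⟩
  | union _ _ iha _ => exact iha.mono Set.subset_union_left
  | relabel _ _ _ ih => exact ih
  | join _ _ _ ih => exact ih

noncomputable def relabelAll (l : List (Fin k)) (j : Fin k) (e : CWExpr k V) : CWExpr k V :=
  l.foldr (fun i acc => relabel i j acc) e

section relabelAll

variable (l : List (Fin k)) (j : Fin k) (e : CWExpr k V)

@[simp] lemma verts_relabelAll : (relabelAll l j e).verts = e.verts := by
  induction l with
  | nil => rfl
  | cons _ _ ih => exact ih

@[simp] lemma edges_relabelAll : (relabelAll l j e).edges = e.edges := by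
  induction l with
  | nil => rfl
  | cons _ _ ih => exact ih

@[simp] lemma wf_relabelAll : (relabelAll l j e).wf ↔ e.wf := by
  induction l with
  | nil => rfl
  | cons _ _ ih => exact ih

lemma label_relabelAll (x : V) :
    (relabelAll l j e).label x = if e.label x ∈ l then j else e.label x := by
  induction l with
  | nil => simp [relabelAll]
  | cons i l ih =>
    change (if (relabelAll l j e).label x = i then j else (relabelAll l j e).label x) = _
    rw [ih]
    split_ifs <;> simp_all

end relabelAll

noncomputable def joinAll (l : List (Fin k × Fin k)) (e : CWExpr k V) : CWExpr k V :=
  l.foldr (fun ij acc => join ij.1 ij.2 acc) e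

section joinAll

variable (l : List (Fin k × Fin k)) (e : CWExpr k V)

@[simp] lemma verts_joinAll : (joinAll l e).verts = e.verts := by
  induction l with
  | nil => rfl
  | cons _ _ ih => exact ih

@[simp] lemma label_joinAll : (joinAll l e).label = e.label := by
  induction l with
  | nil => rfl
  | cons _ _ ih => exact ih

@[simp] lemma wf_joinAll : (joinAll l e).wf ↔ e.wf := by
  induction l with
  | nil => rfl
  | cons _ _ ih => exact ih

lemma edges_joinAll (x y : V) :
    (joinAll l e).edges x y ↔ e.edges x y ∨
      (x ∈ e.verts ∧ y ∈ e.verts ∧ x ≠ y ∧ (e.label x, e.label y) ∈ l) := by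
  induction l with
  | nil => simp [joinAll]
  | cons ij l ih =>
    change (joinAll l e).edges x y ∨ (x ∈ (joinAll l e).verts ∧ y ∈ (joinAll l e).verts ∧
      x ≠ y ∧ (joinAll l e).label x = ij.1 ∧ (joinAll l e).label y = ij.2) ↔ _
    rw [ih, verts_joinAll, label_joinAll, List.mem_cons, Prod.ext_iff]
    tauto

end joinAll

structure Constructs (E : V → V → Prop) (P : Finset V) (e : CWExpr k V) : Prop where
  wf : e.wf
  verts_eq : e.verts = P
  edges_iff : ∀ x y, e.edges x y ↔ E x y ∧ x ∈ P ∧ y ∈ P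

lemma Constructs.relabelAll {E : V → V → Prop} {P : Finset V} {e : CWExpr k V}
    (he : e.Constructs E P) (l : List (Fin k)) (j : Fin k) : (e.relabelAll l j).Constructs E P :=
  ⟨(wf_relabelAll l j e).2 he.wf, by rw [verts_relabelAll, he.verts_eq],
    by simpa using he.edges_iff⟩

end CWExpr

section cliquewidth

variable {V : Type*} [Fintype V] {E : V → V → Prop}

lemma CWExpr.Constructs.cliquewidth_le {k : ℕ} {e : CWExpr k V}
    (he : e.Constructs E Finset.univ) : cliquewidth V E ≤ k :=
  Nat.sInf_le ⟨e, he.wf, by rw [he.verts_eq, Finset.coe_univ], fun x y => by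
    simp [he.edges_iff]⟩

lemma cliquewidth_of_isEmpty [IsEmpty V] : cliquewidth V E = 0 := by
  refine Nat.sInf_eq_zero.2 (Or.inr (Set.eq_empty_of_forall_notMem fun k ⟨e, _⟩ => ?_))
  obtain ⟨x, -⟩ := e.verts_nonempty
  exact isEmptyElim x

end cliquewidth

section PathDecomp

variable {V : Type*} {r : ℕ} (W : Fin r → Set V)

def bagIndices (x : V) : Set ℕ := {n | ∃ h : n < r, x ∈ W ⟨n, h⟩}

noncomputable def firstBag (x : V) : ℕ := sInf (bagIndices W x)

noncomputable def lastBag (x : V) : ℕ := sSup (bagIndices W x)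

lemma mem_bagIndices {x : V} {i : Fin r} (h : x ∈ W i) : (i : ℕ) ∈ bagIndices W x :=
  ⟨i.isLt, h⟩

lemma bddAbove_bagIndices (x : V) : BddAbove (bagIndices W x) :=
  ⟨r, fun _ hn => hn.1.le⟩

namespace IsPathDecomp

variable {W} {E : V → V → Prop} (hdec : IsPathDecomp E W)
include hdec

lemma bagIndices_nonempty (x : V) : (bagIndices W x).Nonempty :=
  let ⟨_, hi⟩ := hdec.1 x
  ⟨_, mem_bagIndices W hi⟩

lemma firstBag_mem (x : V) : firstBag W x ∈ bagIndices W x :=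
  Nat.sInf_mem (hdec.bagIndices_nonempty x)

lemma lastBag_mem (x : V) : lastBag W x ∈ bagIndices W x :=
  Nat.sSup_mem (hdec.bagIndices_nonempty x) (bddAbove_bagIndices W x)

lemma firstBag_le_lastBag (x : V) : firstBag W x ≤ lastBag W x :=
  Nat.sInf_le (hdec.lastBag_mem x)

lemma mem_bag_of_firstBag_le_of_le_lastBag {x : V} {n : ℕ} (hn : n < r)
    (h₁ : firstBag W x ≤ n) (h₂ : n ≤ lastBag W x) : x ∈ W ⟨n, hn⟩ :=
  let ⟨hf, hxf⟩ := hdec.firstBag_mem x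
  let ⟨hl, hxl⟩ := hdec.lastBag_mem x
  hdec.2.1 ⟨_, hf⟩ ⟨n, hn⟩ ⟨_, hl⟩ h₁ h₂ ⟨hxf, hxl⟩

lemma not_arc_of_lastBag_lt_firstBag {u v : V} (h : lastBag W u < firstBag W v) : ¬ E u v := by
  intro huv
  have hu {i : Fin r} (hi : u ∈ W i) : (i : ℕ) ≤ lastBag W u :=
    le_csSup (bddAbove_bagIndices W u) (mem_bagIndices W hi)
  have hv {j : Fin r} (hj : v ∈ W j) : firstBag W v ≤ j := Nat.sInf_le (mem_bagIndices W hj)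
  rcases hdec.2.2 u v huv with ⟨i, hui, hvi⟩ | ⟨i, j, hji, hui, hvj⟩
  · exact absurd h (not_lt.2 ((hv hvi).trans (hu hui)))
  · have : (j : ℕ) < i := hji
    have := hu hui
    have := hv hvj
    omega

end IsPathDecomp

lemma exists_isPathDecomp_ncard_le_pathwidth [Fintype V] (E : V → V → Prop) :
    ∃ (r : ℕ) (W : Fin r → Set V), IsPathDecomp E W ∧ ∀ i, (W i).ncard ≤ pathwidth E + 1 := by
  exact Nat.sInf_mem (s := {w | ∃ (r : ℕ) (W : Fin r → Set V),
    IsPathDecomp E W ∧ ∀ i, (W i).ncard ≤ w + 1}) ⟨Fintype.card V, 1, fun _ => Set.univ,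
    ⟨fun _ => ⟨0, trivial⟩, fun _ _ _ _ _ => Set.inter_subset_left,
      fun _ _ _ => Or.inl ⟨0, trivial, trivial⟩⟩,
    fun _ => by rw [Set.ncard_univ, Nat.card_eq_fintype_card]; omega⟩

end PathDecomp

section Sweep

variable {V : Type*} {r k : ℕ} [NeZero k] {E : V → V → Prop} {W : Fin r → Set V}

structure LiveLabelling (W : Fin r → Set V) (c : ℕ) (Q : Finset V) (lab : V → Fin k) :
    Prop where
  eq_zero_iff : ∀ x ∈ Q, lab x = 0 ↔ lastBag W x < c
  injOn : ∀ x ∈ Q, ∀ y ∈ Q, lab x = lab y → lab x ≠ 0 → x = y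

namespace LiveLabelling

variable {c : ℕ} {P : Finset V} {lab : V → Fin k}

lemma advance (hL : LiveLabelling W c P lab) {c' : ℕ} (hcc' : c ≤ c') {lab' : V → Fin k}
    (hlab' : ∀ x ∈ P, lab' x = if lastBag W x < c' then 0 else lab x) :
    LiveLabelling W c' P lab' := by
  have hlive {x : V} (hx : x ∈ P) (h : lab' x ≠ 0) : lab' x = lab x := by
    rw [hlab' x hx] at h ⊢
    exact if_neg fun hc => h (if_pos hc)
  refine ⟨fun x hx => ?_, fun x hx y hy hxy hx0 => ?_⟩
  · rw [hlab' x hx]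
    split_ifs with h
    · exact iff_of_true rfl h
    · rw [hL.eq_zero_iff x hx]
      exact iff_of_false (by omega) h
  · have hy0 : lab' y ≠ 0 := hxy ▸ hx0
    rw [hlive hx hx0, hlive hy hy0] at hxy
    exact hL.injOn x hx y hy hxy (by rwa [← hlive hx hx0])

lemma insert (hL : LiveLabelling W c P lab) {v : V} (hv : v ∉ P) (hvc : c ≤ lastBag W v)
    {lab' : V → Fin k} (hlab' : ∀ x ∈ P, lab' x = lab x) (hv0 : lab' v ≠ 0)
    (hfree : ∀ x ∈ P, lab x ≠ lab' v) :
    LiveLabelling W c (insert v P) lab' := by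
  refine ⟨fun x hx => ?_, fun x hx y hy hxy hx0 => ?_⟩
  · rcases Finset.mem_insert.1 hx with rfl | hx
    · exact iff_of_false hv0 (not_lt.2 hvc)
    · rw [hlab' x hx, hL.eq_zero_iff x hx]
  · rcases Finset.mem_insert.1 hx with rfl | hxP <;>
      rcases Finset.mem_insert.1 hy with rfl | hyP
    · rfl
    · exact absurd (hlab' y hyP ▸ hxy).symm (hfree y hyP)
    · exact absurd (hlab' x hxP ▸ hxy) (hfree x hxP)
    · rw [hlab' x hxP, hlab' y hyP] at hxy
      exact hL.injOn x hxP y hyP hxy (by rwa [← hlab' x hxP])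

lemma arc_of_label_eq (hdec : IsPathDecomp E W) (hsc : ∀ u v : V, u ≠ v → E u v ∨ E v u)
    {Q : Finset V} {v : V} (hL : LiveLabelling W (firstBag W v) Q lab) (hv : v ∈ Q)
    {x y x' y' : V} (hx : x ∈ Q) (hy : y ∈ Q) (hx' : x' ∈ Q) (hy' : y' ∈ Q) (hxy : x ≠ y)
    (hlx : lab x = lab x') (hly : lab y = lab y') (hE : E x' y') (hv' : x' = v ∨ y' = v) :
    E x y := by
  have hlv : lab v ≠ 0 := by
    rw [Ne, hL.eq_zero_iff v hv, not_lt]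
    exact hdec.firstBag_le_lastBag v
  have hdead {z : V} (hz : z ∈ Q) (h0 : lab z = 0) : ¬ E z v :=
    hdec.not_arc_of_lastBag_lt_firstBag ((hL.eq_zero_iff z hz).1 h0)
  rcases hv' with rfl | rfl
  · obtain rfl : x = x' := hL.injOn x hx x' hx' hlx (hlx ▸ hlv)
    by_cases h0 : lab y' = 0
    · exact (hsc x y hxy).resolve_right (hdead hy (hly.trans h0))
    · rwa [hL.injOn y hy y' hy' hly (hly ▸ h0)]
  · obtain rfl : y = y' := hL.injOn y hy y' hy' hly (hly ▸ hlv)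
    by_cases h0 : lab x' = 0
    · exact absurd hE (hdead hx' h0)
    · rwa [hL.injOn x hx x' hx' hlx (hlx ▸ h0)]

end LiveLabelling

structure SweepState (E : V → V → Prop) (W : Fin r → Set V) (c : ℕ) (P : Finset V)
    (e : CWExpr k V) : Prop where
  constructs : e.Constructs E P
  firstBag_le : ∀ x ∈ P, firstBag W x ≤ c
  labelling : LiveLabelling W c P e.label

lemma sweepState_intro (hirr : ∀ v, ¬ E v v) (hdec : IsPathDecomp E W) (v : V) {ℓ : Fin k}
    (hℓ : ℓ ≠ 0) : SweepState E W (firstBag W v) {v} (CWExpr.intro v ℓ) where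
  constructs := ⟨trivial, by simp [CWExpr.verts], fun x y => by
    simp only [CWExpr.edges, Finset.mem_singleton, false_iff]
    rintro ⟨hE, rfl, rfl⟩
    exact hirr _ hE⟩
  firstBag_le x hx := by rw [Finset.mem_singleton.1 hx]
  labelling := ⟨fun x hx => by
      rw [Finset.mem_singleton.1 hx]
      exact iff_of_false hℓ (not_lt.2 (hdec.firstBag_le_lastBag v)),
    fun x hx y hy _ _ => by rw [Finset.mem_singleton.1 hx, Finset.mem_singleton.1 hy]⟩

namespace SweepState

variable {c : ℕ} {P : Finset V} {e : CWExpr k V}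

lemma advance (hS : SweepState E W c P e) {c' : ℕ} (hcc' : c ≤ c')
    (hP : ∀ x ∈ P, firstBag W x ≤ c') : ∃ e' : CWExpr k V, SweepState E W c' P e' := by
  set K := ((P.filter fun x => lastBag W x < c').image e.label).toList
  have hK (x : V) (hx : x ∈ P) : e.label x ∈ K ↔ lastBag W x < c' := by
    simp only [K, Finset.mem_toList, Finset.mem_image, Finset.mem_filter]
    refine ⟨fun ⟨y, ⟨hy, hyc⟩, hyx⟩ => ?_, fun h => ⟨x, ⟨hx, h⟩, rfl⟩⟩
    by_contra! hxc
    have hx0 : e.label x ≠ 0 := by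
      rw [Ne, hS.labelling.eq_zero_iff x hx, not_lt]
      exact hcc'.trans hxc
    obtain rfl := hS.labelling.injOn y hy x hx hyx (hyx ▸ hx0)
    omega
  refine ⟨e.relabelAll K 0, hS.constructs.relabelAll K 0, hP,
    hS.labelling.advance hcc' fun x hx => ?_⟩
  rw [CWExpr.label_relabelAll]
  exact if_congr (hK x hx) rfl rfl

lemma exists_free_label [Finite V] (hdec : IsPathDecomp E W) (hsize : ∀ i, (W i).ncard < k)
    {v : V} (hS : SweepState E W (firstBag W v) P e) (hv : v ∉ P) :
    ∃ ℓ ≠ 0, ∀ x ∈ P, e.label x ≠ ℓ := by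
  set A := P.filter fun x => firstBag W v ≤ lastBag W x
  obtain ⟨hc, -⟩ := hdec.firstBag_mem v
  have hbag : ↑(insert v A) ⊆ W ⟨firstBag W v, hc⟩ := by
    intro x hx
    rcases Finset.mem_insert.1 hx with rfl | hx
    · exact hdec.mem_bag_of_firstBag_le_of_le_lastBag hc le_rfl (hdec.firstBag_le_lastBag x)
    · obtain ⟨hxP, hxc⟩ := Finset.mem_filter.1 hx
      exact hdec.mem_bag_of_firstBag_le_of_le_lastBag hc (hS.firstBag_le x hxP) hxc
  have hcard : (insert 0 (A.image e.label)).card < (Finset.univ : Finset (Fin k)).card :=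
    calc (insert 0 (A.image e.label)).card ≤ A.card + 1 :=
          (Finset.card_insert_le _ _).trans (Nat.add_le_add_right Finset.card_image_le 1)
      _ = (↑(insert v A) : Set V).ncard := by
          rw [Set.ncard_coe_finset, Finset.card_insert_of_notMem
            fun h => hv (Finset.mem_filter.1 h).1]
      _ ≤ (W ⟨firstBag W v, hc⟩).ncard := Set.ncard_le_ncard hbag
      _ < _ := by simpa using hsize _
  obtain ⟨ℓ, -, hℓ⟩ := Finset.exists_mem_notMem_of_card_lt_card hcard
  refine ⟨ℓ, fun h => hℓ (h ▸ Finset.mem_insert_self _ _), fun x hx hxℓ => hℓ (hxℓ ▸ ?_)⟩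
  by_cases hxc : firstBag W v ≤ lastBag W x
  · exact Finset.mem_insert_of_mem (Finset.mem_image_of_mem _ (Finset.mem_filter.2 ⟨hx, hxc⟩))
  · rw [(hS.labelling.eq_zero_iff x hx).2 (not_le.1 hxc)]
    exact Finset.mem_insert_self _ _

end SweepState

end Sweep

namespace SweepState

variable {V : Type*} {r k : ℕ} [NeZero k] {E : V → V → Prop} {W : Fin r → Set V}
  {P : Finset V} {e : CWExpr k V}

lemma exists_insert (hirr : ∀ v, ¬ E v v) (hsc : ∀ u v : V, u ≠ v → E u v ∨ E v u)
    (hdec : IsPathDecomp E W) {v : V} (hS : SweepState E W (firstBag W v) P e) (hv : v ∉ P)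
    {ℓ : Fin k} (hℓ0 : ℓ ≠ 0) (hℓ : ∀ x ∈ P, e.label x ≠ ℓ) :
    ∃ e' : CWExpr k V, SweepState E W (firstBag W v) (insert v P) e' := by
  set e₂ := CWExpr.union e (CWExpr.intro v ℓ)
  have hvP : v ∉ e.verts := by rw [hS.constructs.verts_eq]; exact_mod_cast hv
  have hverts : e₂.verts = ↑(insert v P) := by
    rw [Finset.coe_insert, Set.insert_eq, Set.union_comm, ← hS.constructs.verts_eq]
    rfl
  have hlabP (x : V) (hx : x ∈ P) : e₂.label x = e.label x :=
    if_pos (by rw [hS.constructs.verts_eq]; exact_mod_cast hx)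
  have hlabv : e₂.label v = ℓ := if_neg hvP
  have hL : LiveLabelling W (firstBag W v) (insert v P) e₂.label :=
    hS.labelling.insert hv (hdec.firstBag_le_lastBag v) hlabP (hlabv ▸ hℓ0) (hlabv ▸ hℓ)
  set L := (Finset.univ.filter fun ab : Fin k × Fin k => ∃ x ∈ insert v P, ∃ y ∈ insert v P,
    E x y ∧ (x = v ∨ y = v) ∧ (e₂.label x, e₂.label y) = ab).toList
  refine ⟨e₂.joinAll L, ⟨?_, by rw [CWExpr.verts_joinAll, hverts], fun x y => ?_⟩,
    fun x hx => ?_, by rw [CWExpr.label_joinAll]; exact hL⟩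
  · exact (CWExpr.wf_joinAll L e₂).2
      ⟨hS.constructs.wf, trivial, Set.disjoint_singleton_right.2 hvP⟩
  · rw [CWExpr.edges_joinAll]
    change (e.edges x y ∨ False) ∨ _ ↔ _
    simp only [hverts, hS.constructs.edges_iff, or_false, Finset.mem_coe, L, Finset.mem_toList,
      Finset.mem_filter, Finset.mem_univ, true_and, Prod.mk.injEq]
    constructor
    · rintro (⟨hE, hx, hy⟩ | ⟨hx, hy, hxy, x', hx', y', hy', hE, hv', hlx, hly⟩)
      · exact ⟨hE, Finset.mem_insert_of_mem hx, Finset.mem_insert_of_mem hy⟩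
      · exact ⟨hL.arc_of_label_eq hdec hsc (Finset.mem_insert_self v P) hx hy hx' hy' hxy
          hlx.symm hly.symm hE hv', hx, hy⟩
    · rintro ⟨hE, hx, hy⟩
      by_cases hxyP : x ∈ P ∧ y ∈ P
      · exact Or.inl ⟨hE, hxyP⟩
      · have hv' : x = v ∨ y = v := by
          rw [Finset.mem_insert] at hx hy
          tauto
        exact Or.inr ⟨hx, hy, fun h => hirr y (h ▸ hE), x, hx, y, hy, hE, hv', rfl, rfl⟩
  · rcases Finset.mem_insert.1 hx with rfl | hx
    · exact le_rfl
    · exact hS.firstBag_le x hx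

lemma step [Finite V] (hirr : ∀ v, ¬ E v v) (hsc : ∀ u v : V, u ≠ v → E u v ∨ E v u)
    (hdec : IsPathDecomp E W) (hsize : ∀ i, (W i).ncard < k) {c : ℕ}
    (hS : SweepState E W c P e) {v : V} (hv : v ∉ P) (hcv : c ≤ firstBag W v) :
    ∃ e' : CWExpr k V, SweepState E W (firstBag W v) (insert v P) e' := by
  obtain ⟨e₁, hS₁⟩ := hS.advance hcv fun x hx => (hS.firstBag_le x hx).trans hcv
  obtain ⟨ℓ, hℓ0, hℓ⟩ := hS₁.exists_free_label hdec hsize hv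
  exact hS₁.exists_insert hirr hsc hdec hv hℓ0 hℓ

lemma extend [Finite V] (hirr : ∀ v, ¬ E v v) (hsc : ∀ u v : V, u ≠ v → E u v ∨ E v u)
    (hdec : IsPathDecomp E W) (hsize : ∀ i, (W i).ncard < k) (R : Finset V) {c : ℕ}
    (hS : SweepState E W c P e) (hRP : Disjoint R P) (hR : ∀ x ∈ R, c ≤ firstBag W x) :
    ∃ e' : CWExpr k V, e'.Constructs E (P ∪ R) := by
  induction R using Finset.strongInduction generalizing P e c with
  | H R ih =>
  rcases R.eq_empty_or_nonempty with rfl | hne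
  · exact ⟨e, by simpa using hS.constructs⟩
  obtain ⟨v, hvR, hmin⟩ := R.exists_min_image (firstBag W) hne
  have hvP : v ∉ P := Finset.disjoint_left.1 hRP hvR
  obtain ⟨e', hS'⟩ := hS.step hirr hsc hdec hsize hvP (hR v hvR)
  have hRP' : Disjoint (R.erase v) (insert v P) :=
    Finset.disjoint_insert_right.2 ⟨R.notMem_erase v, hRP.mono_left (R.erase_subset v)⟩
  rw [← Finset.insert_erase hvR, Finset.union_insert, ← Finset.insert_union]
  exact ih _ (Finset.erase_ssubset hvR) hS' hRP' fun x hx => hmin x (Finset.mem_of_mem_erase hx)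

end SweepState

theorem exists_constructs_of_isPathDecomp {V : Type*} [Fintype V] [Nonempty V] {r k : ℕ}
    {E : V → V → Prop} {W : Fin r → Set V} (hirr : ∀ v, ¬ E v v)
    (hsc : ∀ u v : V, u ≠ v → E u v ∨ E v u) (hdec : IsPathDecomp E W)
    (hsize : ∀ i, (W i).ncard < k) : ∃ e : CWExpr k V, e.Constructs E Finset.univ := by
  obtain ⟨v, -, hmin⟩ := Finset.univ.exists_min_image (firstBag W) Finset.univ_nonempty
  obtain ⟨hr, hvW⟩ := hdec.firstBag_mem v
  have hk : 1 < k := lt_of_le_of_lt (Nat.one_le_iff_ne_zero.2 (Set.ncard_ne_zero_of_mem hvW)) (hsize _)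
  have : NeZero k := ⟨by omega⟩
  have hS := sweepState_intro (E := E) hirr hdec v (ℓ := ⟨1, hk⟩) (by simp [Fin.ext_iff])
  obtain ⟨e, he⟩ := hS.extend hirr hsc hdec hsize (Finset.univ.erase v)
    (Finset.disjoint_singleton_right.2 (Finset.notMem_erase v _))
    fun x _ => hmin x (Finset.mem_univ x)
  rw [← Finset.insert_eq, Finset.insert_erase (Finset.mem_univ v)] at he
  exact ⟨e, he⟩

/-- For every semi-complete digraph `T`, `cw(T) ≤ pw(T) + 2`. -/
theorem stmt_7 {V : Type u} [Fintype V] (E : V → V → Prop)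
    (hirr : ∀ v, ¬ E v v)
    (hsc : ∀ u v : V, u ≠ v → E u v ∨ E v u) :
    cliquewidth V E ≤ pathwidth E + 2 := by
  rcases isEmpty_or_nonempty V with hV | hV
  · rw [cliquewidth_of_isEmpty]
    exact Nat.zero_le _
  obtain ⟨r, W, hdec, hsize⟩ := exists_isPathDecomp_ncard_le_pathwidth E
  obtain ⟨e, he⟩ := exists_constructs_of_isPathDecomp (k := pathwidth E + 2) hirr hsc hdec
    fun i => Nat.lt_succ_of_le (hsize i)
  exact he.cliquewidth_le
end

section
/- Every digraph H (possibly with multiple arcs but without loops) is topologically contained in every |H|-triple, where |H| = |V(H)| + |E(H)|. That is, if a semi-complete digraph T contains a k-triple (A,B,C) and H is a digraph with |V(H)| + |E(H)| ≤ k, then there is an expansion of H in T. -/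
/-!
Embed the vertices of `H` injectively into `B` and the arcs of `H` injectively into the
indices of the triple. An arc `e` from `u` to `w` is then realised by the path
`b_u → c_e → a_e → b_w`: the arcs `(b_u, c_e)` and `(a_e, b_w)` exist because `B ⇒ C` and
`A ⇒ B` are complete, and `(c_e, a_e)` is a matching arc of the triple. Distinct arcs use
distinct indices, so the interiors `{c_e, a_e}` are pairwise disjoint and avoid `B`.
-/

open Function

/-- A `k`-triple in a digraph: pairwise disjoint `k`-element sets `A`, `B`, `C` with
orderings `a, b, c` such that all arcs `(a_i, b_j)` and `(b_i, c_j)` exist, and for each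
`i` the arc `(c_i, a_i)` exists. -/
def IsKTriple {V : Type*} (E : V → V → Prop) (k : ℕ) (A B C : Set V) : Prop :=
  ∃ a b c : Fin k → V,
    Function.Injective a ∧ Function.Injective b ∧ Function.Injective c ∧
    A = Set.range a ∧ B = Set.range b ∧ C = Set.range c ∧
    Disjoint A B ∧ Disjoint B C ∧ Disjoint A C ∧
    (∀ i j : Fin k, E (a i) (b j)) ∧
    (∀ i j : Fin k, E (b i) (c j)) ∧
    (∀ i : Fin k, E (c i) (a i))

/-- Paths are vertex lists, so `(P e).tail.dropLast` is the interior of the path of `e`. -/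
def IsExpansion {V VH EH : Type*} (E : V → V → Prop) (src tgt : EH → VH) (η : VH → V)
    (P : EH → List V) : Prop :=
  Injective η ∧
    (∀ e, (P e).IsChain E ∧ (P e).Nodup ∧
      (P e).head? = some (η (src e)) ∧ (P e).getLast? = some (η (tgt e))) ∧
    (∀ e, ∀ x ∈ (P e).tail.dropLast, x ∉ Set.range η) ∧
    (∀ e e', e ≠ e' → ∀ x ∈ (P e).tail.dropLast, x ∉ (P e').tail.dropLast)

theorem isExpansion_of_detours {V VH EH : Type*} {E : V → V → Prop} {src tgt : EH → VH}
    (hnoloop : ∀ e, src e ≠ tgt e) {η : VH → V} {x y : EH → V}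
    (hη : Injective η) (hx : Injective x) (hy : Injective y)
    (hxy : ∀ e e', x e ≠ y e') (hxη : ∀ e v, x e ≠ η v) (hyη : ∀ e v, y e ≠ η v)
    (hEx : ∀ e, E (η (src e)) (x e)) (hExy : ∀ e, E (x e) (y e))
    (hEy : ∀ e, E (y e) (η (tgt e))) :
    IsExpansion E src tgt η fun e => [η (src e), x e, y e, η (tgt e)] := by
  refine ⟨hη, fun e => ⟨?_, ?_, rfl, rfl⟩, ?_, ?_⟩
  · exact List.isChain_cons_cons.mpr ⟨hEx e, List.isChain_cons_cons.mpr
      ⟨hExy e, List.isChain_pair.mpr (hEy e)⟩⟩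
  · simp only [List.nodup_cons, List.mem_cons, List.not_mem_nil, List.nodup_nil, or_false,
      not_or]
    exact ⟨⟨(hxη _ _).symm, (hyη _ _).symm, fun h => hnoloop e (hη h)⟩,
      ⟨hxy _ _, hxη _ _⟩, hyη _ _, not_false, trivial⟩
  · rintro e z hz ⟨v, rfl⟩
    simp only [List.tail_cons, List.dropLast, List.mem_cons, List.not_mem_nil, or_false] at hz
    rcases hz with h | h
    exacts [hxη _ _ h.symm, hyη _ _ h.symm]
  · intro e e' hne z hz hz'
    simp only [List.tail_cons, List.dropLast, List.mem_cons, List.not_mem_nil, or_false]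
      at hz hz'
    rcases hz with rfl | rfl <;> rcases hz' with h | h
    exacts [hne (hx h), hxy _ _ h, hxy _ _ h.symm, hne (hy h)]

theorem IsKTriple.exists_apply_ne {V : Type*} {E : V → V → Prop} {k : ℕ} {A B C : Set V}
    (h : IsKTriple E k A B C) :
    ∃ a b c : Fin k → V, Injective a ∧ Injective b ∧ Injective c ∧
      (∀ i j, a i ≠ b j) ∧ (∀ i j, c i ≠ a j) ∧ (∀ i j, c i ≠ b j) ∧
      (∀ i j, E (a i) (b j)) ∧ (∀ i j, E (b i) (c j)) ∧ (∀ i, E (c i) (a i)) := by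
  obtain ⟨a, b, c, ha, hb, hc, rfl, rfl, rfl, hAB, hBC, hAC, hab, hbc, hca⟩ := h
  refine ⟨a, b, c, ha, hb, hc, fun i j hij => ?_, fun i j hij => ?_, fun i j hij => ?_,
    hab, hbc, hca⟩
  · exact Set.disjoint_left.mp hAB ⟨i, rfl⟩ ⟨j, hij.symm⟩
  · exact Set.disjoint_left.mp hAC ⟨j, rfl⟩ ⟨i, hij⟩
  · exact Set.disjoint_left.mp hBC ⟨j, rfl⟩ ⟨i, hij⟩

theorem stmt_9_general {V : Type*} (E : V → V → Prop)
    (k : ℕ) (A B C : Set V) (htriple : IsKTriple E k A B C)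
    {VH EH : Type*} [Fintype VH] [Fintype EH] (src tgt : EH → VH)
    (hnoloop : ∀ e, src e ≠ tgt e)
    (hsize : Fintype.card VH + Fintype.card EH ≤ k) :
    ∃ (ηv : VH → V) (P : EH → List V),
      Function.Injective ηv ∧
      (∀ e, (P e).Chain' E ∧ (P e).Nodup ∧
        (P e).head? = some (ηv (src e)) ∧ (P e).getLast? = some (ηv (tgt e))) ∧
      (∀ e, ∀ x ∈ (P e).tail.dropLast, x ∉ Set.range ηv) ∧
      (∀ e e', e ≠ e' → ∀ x ∈ (P e).tail.dropLast, x ∉ (P e').tail.dropLast) := by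
  obtain ⟨a, b, c, ha, hb, hc, hab, hca, hcb, hEab, hEbc, hEca⟩ := htriple.exists_apply_ne
  obtain ⟨ιV⟩ : Nonempty (VH ↪ Fin k) :=
    Function.Embedding.nonempty_of_card_le (by simpa using (Nat.le_add_right _ _).trans hsize)
  obtain ⟨ιE⟩ : Nonempty (EH ↪ Fin k) :=
    Function.Embedding.nonempty_of_card_le (by simpa using (Nat.le_add_left _ _).trans hsize)
  exact ⟨_, _, isExpansion_of_detours (x := c ∘ ιE) (y := a ∘ ιE) hnoloop
    (hb.comp ιV.injective) (hc.comp ιE.injective) (ha.comp ιE.injective)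
    (fun _ _ => hca _ _) (fun _ _ => hcb _ _) (fun _ _ => hab _ _)
    (fun _ => hEbc _ _) (fun _ => hEca _) (fun _ => hEab _ _)⟩

/-- Every digraph `H` (possibly with multiple arcs, no loops) with
`|V(H)| + |E(H)| ≤ k` has an expansion (topological containment) in any semi-complete
digraph containing a `k`-triple: there are an injective map on vertices and internally
vertex-disjoint directed paths realizing the arcs of `H`, whose interiors avoid all
vertex images. -/
theorem stmt_9 {V : Type*} [Fintype V] (E : V → V → Prop)
    (hirr : ∀ v, ¬ E v v)
    (hsc : ∀ u v : V, u ≠ v → E u v ∨ E v u)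
    (k : ℕ) (A B C : Set V) (htriple : IsKTriple E k A B C)
    {VH EH : Type*} [Fintype VH] [Fintype EH] (src tgt : EH → VH)
    (hnoloop : ∀ e, src e ≠ tgt e)
    (hsize : Fintype.card VH + Fintype.card EH ≤ k) :
    ∃ (ηv : VH → V) (P : EH → List V),
      Function.Injective ηv ∧
      (∀ e, (P e).Chain' E ∧ (P e).Nodup ∧
        (P e).head? = some (ηv (src e)) ∧ (P e).getLast? = some (ηv (tgt e))) ∧
      (∀ e, ∀ x ∈ (P e).tail.dropLast, x ∉ Set.range ηv) ∧
      (∀ e e', e ≠ e' → ∀ x ∈ (P e).tail.dropLast, x ∉ (P e').tail.dropLast) :=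
  stmt_9_general E k A B C htriple src tgt hnoloop hsize
end

section
/- Let T be a semi-complete digraph and W ⊆ V(T) with |W| ≥ 5k + 4ℓ such that W is not (k,ℓ)-separable. Let S = T[W] and let Z = {w ∈ W : d_S^+(w) ≥ k+ℓ and d_S^-(w) ≥ k+ℓ}. Then |Z| ≥ |W| − 4(k+ℓ) + 2 ≥ k, and every subset of Z of cardinality k is a k-jungle in T. -/
/-- `W` is `(k,ℓ)`-separable: there is a separation `(A,B)` of order at most `k` with
`|W \ A| ≥ ℓ` and `|W \ B| ≥ ℓ`. -/
def Separable {V : Type*} [Fintype V] [DecidableEq V]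
    (E : V → V → Prop) (k ℓ : ℕ) (W : Finset V) : Prop :=
  ∃ A B : Finset V, IsSeparationF E A B ∧ (A ∩ B).card ≤ k ∧
    ℓ ≤ (W \ A).card ∧ ℓ ≤ (W \ B).card

/-- A `k`-jungle: a `k`-element set `Z` such that no two of its members are separated by
a separation of order less than `k`. -/
def IsJungle {V : Type*} [Fintype V] [DecidableEq V]
    (E : V → V → Prop) (k : ℕ) (Z : Finset V) : Prop :=
  Z.card = k ∧ ∀ x ∈ Z, ∀ y ∈ Z,
    ¬ ∃ A B : Finset V, IsSeparationF E A B ∧ (A ∩ B).card < k ∧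
      x ∈ A \ B ∧ y ∈ B \ A

/-! A vertex of `Z` has at least `k + ℓ` out-neighbours in `W`, all on its own side of any
separation, so a separation of order `< k` putting two vertices of `Z` on opposite sides
leaves at least `ℓ` vertices of `W` strictly on each side: it would be an `ℓ`-separator of `W`.
For the size of `Z`, the vertices of low out-degree span a semi-complete digraph of maximum
out-degree `< k + ℓ`, which has fewer than `2(k + ℓ)` vertices since it has at least
`n(n-1)/2` arcs; the same holds for in-degrees. -/

open Finset

def IsSemicomplete {V : Type*} (E : V → V → Prop) : Prop :=
  ∀ u v : V, u ≠ v → E u v ∨ E v u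

theorem IsSemicomplete.swap {V : Type*} {E : V → V → Prop} (hE : IsSemicomplete E) :
    IsSemicomplete (Function.swap E) :=
  fun u v huv => (hE u v huv).symm

section Degrees

variable {V : Type*} [DecidableEq V] {E : V → V → Prop} [DecidableRel E]

theorem IsSemicomplete.card_sub_one_le_outdeg_add_indeg (hE : IsSemicomplete E)
    {X : Finset V} {x : V} (hx : x ∈ X) :
    #X - 1 ≤ #{u ∈ X | E x u} + #{u ∈ X | E u x} := by
  have hcover : X.erase x ⊆ {u ∈ X | E x u} ∪ {u ∈ X | E u x} := by
    intro u hu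
    obtain ⟨hux, huX⟩ := mem_erase.mp hu
    rcases hE x u (Ne.symm hux) with h | h <;> simp [huX, h]
  calc #X - 1 = #(X.erase x) := (card_erase_of_mem hx).symm
    _ ≤ _ := (card_le_card hcover).trans (card_union_le _ _)

theorem IsSemicomplete.card_le_of_forall_outdeg_lt (hE : IsSemicomplete E)
    {X : Finset V} {d : ℕ} (h : ∀ x ∈ X, #{u ∈ X | E x u} < d) :
    #X ≤ 2 * d - 1 := by
  rcases X.eq_empty_or_nonempty with rfl | ⟨x₀, hx₀⟩
  · simp
  have hd : 1 ≤ d := Nat.one_le_of_lt (h x₀ hx₀)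
  have hin : ∑ x ∈ X, #{u ∈ X | E u x} = ∑ x ∈ X, #{u ∈ X | E x u} :=
    (sum_card_bipartiteAbove_eq_sum_card_bipartiteBelow E).symm
  have hpairs : #X * (#X - 1) ≤ #X * (2 * (d - 1)) :=
    calc #X * (#X - 1) = ∑ _ ∈ X, (#X - 1) := by rw [sum_const, smul_eq_mul]
      _ ≤ ∑ x ∈ X, (#{u ∈ X | E x u} + #{u ∈ X | E u x}) :=
          sum_le_sum fun x hx => hE.card_sub_one_le_outdeg_add_indeg hx
      _ = 2 * ∑ x ∈ X, #{u ∈ X | E x u} := by rw [sum_add_distrib, hin, two_mul]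
      _ ≤ 2 * ∑ _ ∈ X, (d - 1) :=
          Nat.mul_le_mul_left 2 (sum_le_sum fun x hx => Nat.le_sub_one_of_lt (h x hx))
      _ = #X * (2 * (d - 1)) := by rw [sum_const, smul_eq_mul]; ring
  have := Nat.le_of_mul_le_mul_left hpairs (card_pos.mpr ⟨x₀, hx₀⟩)
  omega

theorem IsSemicomplete.card_filter_outdeg_lt_le (hE : IsSemicomplete E) (W : Finset V)
    (d : ℕ) : #{w ∈ W | #{u ∈ W | E w u} < d} ≤ 2 * d - 1 :=
  hE.card_le_of_forall_outdeg_lt fun _ hx =>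
    (card_le_card (filter_subset_filter _ (filter_subset _ _))).trans_lt (mem_filter.mp hx).2

theorem IsSemicomplete.card_filter_indeg_lt_le (hE : IsSemicomplete E) (W : Finset V)
    (d : ℕ) : #{w ∈ W | #{u ∈ W | E u w} < d} ≤ 2 * d - 1 :=
  hE.swap.card_filter_outdeg_lt_le W d

theorem IsSemicomplete.card_add_two_le_card_filter_high_degree_add (hE : IsSemicomplete E)
    (W : Finset V) {d : ℕ} (hd : 1 ≤ d) :
    #W + 2 ≤ #{w ∈ W | d ≤ #{u ∈ W | E w u} ∧ d ≤ #{u ∈ W | E u w}} + 4 * d := by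
  set Z := {w ∈ W | d ≤ #{u ∈ W | E w u} ∧ d ≤ #{u ∈ W | E u w}}
  have hcover : W \ Z ⊆ {w ∈ W | #{u ∈ W | E w u} < d} ∪ {w ∈ W | #{u ∈ W | E u w} < d} := by
    intro w hw
    simp only [Z, mem_sdiff, mem_filter, not_and_or, not_le] at hw
    simp only [mem_union, mem_filter]
    tauto
  have hlow : #(W \ Z) ≤ 2 * (2 * d - 1) :=
    calc #(W \ Z) ≤ _ := (card_le_card hcover).trans (card_union_le _ _)
      _ ≤ (2 * d - 1) + (2 * d - 1) :=
          add_le_add (hE.card_filter_outdeg_lt_le W d) (hE.card_filter_indeg_lt_le W d)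
      _ = 2 * (2 * d - 1) := (two_mul _).symm
  have hZW : Z ⊆ W := filter_subset _ _
  rw [card_sdiff_of_subset hZW] at hlow
  omega

end Degrees

section Separations

variable {V : Type*} [Fintype V] [DecidableEq V] {E : V → V → Prop} {A B : Finset V}

theorem IsSeparationF.mem_left_of_adj (hAB : IsSeparationF E A B) {x u : V}
    (hx : x ∈ A \ B) (hxu : E x u) : u ∈ A := by
  by_contra huA
  have huB : u ∈ B := (mem_union.mp (hAB.1 ▸ mem_univ u)).resolve_left huA
  exact hAB.2 x hx u (mem_sdiff.mpr ⟨huB, huA⟩) hxu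

theorem IsSeparationF.mem_right_of_adj (hAB : IsSeparationF E A B) {y u : V}
    (hy : y ∈ B \ A) (huy : E u y) : u ∈ B := by
  by_contra huB
  have huA : u ∈ A := (mem_union.mp (hAB.1 ▸ mem_univ u)).resolve_right huB
  exact hAB.2 u (mem_sdiff.mpr ⟨huA, huB⟩) y hy huy

theorem separable_zero (k : ℕ) (W : Finset V) : Separable E k 0 W :=
  ⟨univ, ∅, ⟨by simp, by simp⟩, by simp, Nat.zero_le _, Nat.zero_le _⟩

variable [DecidableRel E]

theorem IsSeparationF.outdeg_le (hAB : IsSeparationF E A B) {x : V} (hx : x ∈ A \ B)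
    (W : Finset V) : #{u ∈ W | E x u} ≤ #(A ∩ B) + #(W \ B) := by
  refine (card_le_card fun u hu => ?_).trans (card_union_le _ _)
  obtain ⟨huW, hxu⟩ := mem_filter.mp hu
  by_cases huB : u ∈ B
  · exact mem_union_left _ (mem_inter.mpr ⟨hAB.mem_left_of_adj hx hxu, huB⟩)
  · exact mem_union_right _ (mem_sdiff.mpr ⟨huW, huB⟩)

theorem IsSeparationF.indeg_le (hAB : IsSeparationF E A B) {y : V} (hy : y ∈ B \ A)
    (W : Finset V) : #{u ∈ W | E u y} ≤ #(A ∩ B) + #(W \ A) := by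
  refine (card_le_card fun u hu => ?_).trans (card_union_le _ _)
  obtain ⟨huW, huy⟩ := mem_filter.mp hu
  by_cases huA : u ∈ A
  · exact mem_union_left _ (mem_inter.mpr ⟨huA, hAB.mem_right_of_adj hy huy⟩)
  · exact mem_union_right _ (mem_sdiff.mpr ⟨huW, huA⟩)

theorem separable_of_separation_between_high_degree {k ℓ : ℕ} {W : Finset V}
    (hAB : IsSeparationF E A B) (hord : #(A ∩ B) ≤ k) {x y : V}
    (hx : x ∈ A \ B) (hxdeg : k + ℓ ≤ #{u ∈ W | E x u})
    (hy : y ∈ B \ A) (hydeg : k + ℓ ≤ #{u ∈ W | E u y}) :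
    Separable E k ℓ W := by
  have hB := hAB.outdeg_le hx W
  have hA := hAB.indeg_le hy W
  exact ⟨A, B, hAB, hord, by omega, by omega⟩

end Separations

theorem stmt_10_general {V : Type*} [Fintype V] [DecidableEq V]
    (E : V → V → Prop) [DecidableRel E]
    (hsc : ∀ u v : V, u ≠ v → E u v ∨ E v u)
    (k ℓ : ℕ) (W : Finset V)
    (hW : 5 * k + 4 * ℓ ≤ W.card)
    (hns : ¬ Separable E k ℓ W)
    (Z : Finset V)
    (hZ : Z = W.filter (fun w =>
      k + ℓ ≤ (W.filter (fun u => E w u)).card ∧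
      k + ℓ ≤ (W.filter (fun u => E u w)).card)) :
    (W.card - 4 * (k + ℓ) + 2 ≤ Z.card ∧ k ≤ Z.card) ∧
    ∀ Z' ⊆ Z, Z'.card = k → IsJungle E k Z' := by
  subst hZ
  have hℓ : ℓ ≠ 0 := by
    rintro rfl
    exact hns (separable_zero k W)
  have hcard : #W + 2 ≤ #_ + 4 * (k + ℓ) :=
    IsSemicomplete.card_add_two_le_card_filter_high_degree_add hsc W (by omega)
  refine ⟨⟨by omega, by omega⟩, fun Z' hZ' hZ'card => ⟨hZ'card, fun x hx y hy => ?_⟩⟩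
  rintro ⟨A, B, hAB, hord, hxA, hyB⟩
  have hxdeg := (mem_filter.mp (hZ' hx)).2.1
  have hydeg := (mem_filter.mp (hZ' hy)).2.2
  exact hns (separable_of_separation_between_high_degree hAB hord.le hxA hxdeg hyB hydeg)

/-- If `W` has at least `5k + 4ℓ` vertices and is not `(k,ℓ)`-separable in
a semi-complete digraph `T`, then the set `Z` of vertices of `W` with in- and out-degree
at least `k + ℓ` inside `T[W]` has size at least `|W| − 4(k+ℓ) + 2 ≥ k`, and every
`k`-element subset of `Z` is a `k`-jungle. -/
theorem stmt_10 {V : Type*} [Fintype V] [DecidableEq V]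
    (E : V → V → Prop) [DecidableRel E]
    (hirr : ∀ v, ¬ E v v)
    (hsc : ∀ u v : V, u ≠ v → E u v ∨ E v u)
    (k ℓ : ℕ) (W : Finset V)
    (hW : 5 * k + 4 * ℓ ≤ W.card)
    (hns : ¬ Separable E k ℓ W)
    (Z : Finset V)
    (hZ : Z = W.filter (fun w =>
      k + ℓ ≤ (W.filter (fun u => E w u)).card ∧
      k + ℓ ≤ (W.filter (fun u => E u w)).card)) :
    (W.card - 4 * (k + ℓ) + 2 ≤ Z.card ∧ k ≤ Z.card) ∧
    ∀ Z' ⊆ Z, Z'.card = k → IsJungle E k Z' :=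
  stmt_10_general E hsc k ℓ W hW hns Z hZ
end

section
/- In a semi-complete digraph, if a set Z of vertices has the property that every z ∈ Z has both in-degree and out-degree at least k + ℓ − 1 + 1 = k + ℓ within T[W] (for W ⊇ Z not (k,ℓ)-separable), then no separation of order less than k separates any vertex of Z from any other. In particular, for distinct x, y ∈ Z there is no separation (A,B) of order < k with x ∈ A∖B, y ∈ B∖A. -/
open Finset

namespace IsSeparationF

variable {V : Type*} [Fintype V] [DecidableEq V] {E : V → V → Prop} {A B : Finset V}

theorem symm (h : IsSeparationF E A B) : IsSeparationF (fun u v => E v u) B A :=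
  ⟨by rw [union_comm]; exact h.1, fun u hu v hv => h.2 v hv u hu⟩

theorem mem_right_of_adj_s11 (h : IsSeparationF E A B) {u v : V} (hv : v ∈ B \ A) (huv : E u v) :
    u ∈ B := by
  by_contra hu
  have huA : u ∈ A := (mem_union.1 (h.1 ▸ mem_univ u)).resolve_right hu
  exact h.2 u (mem_sdiff.2 ⟨huA, hu⟩) v hv huv

theorem card_filter_adj_le [DecidableRel E] (h : IsSeparationF E A B) (W : Finset V) {v : V}
    (hv : v ∈ B \ A) : (W.filter (fun u => E u v)).card ≤ (A ∩ B).card + (W \ A).card :=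
  calc (W.filter (fun u => E u v)).card
      ≤ ((A ∩ B) ∪ (W \ A)).card := card_le_card fun u hu => by
        obtain ⟨huW, huv⟩ := mem_filter.1 hu
        by_cases huA : u ∈ A
        · exact mem_union_left _ (mem_inter.2 ⟨huA, h.mem_right_of_adj_s11 hv huv⟩)
        · exact mem_union_right _ (mem_sdiff.2 ⟨huW, huA⟩)
    _ ≤ (A ∩ B).card + (W \ A).card := card_union_le _ _

end IsSeparationF

theorem stmt_11_general {V : Type*} [Fintype V] [DecidableEq V]
    (E : V → V → Prop) [DecidableRel E]
    (k ℓ : ℕ) (W : Finset V)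
    (hns : ¬ Separable E k ℓ W)
    (Z : Finset V)
    (hZ : Z = W.filter (fun w =>
      k + ℓ ≤ (W.filter (fun u => E w u)).card ∧
      k + ℓ ≤ (W.filter (fun u => E u w)).card)) :
    ∀ x ∈ Z, ∀ y ∈ Z, x ≠ y →
      ¬ ∃ A B : Finset V, IsSeparationF E A B ∧ (A ∩ B).card < k ∧
        x ∈ A \ B ∧ y ∈ B \ A := by
  subst hZ
  rintro x hx y hy - ⟨A, B, hsep, hord, hxA, hyB⟩
  obtain ⟨-, hx_out, -⟩ := mem_filter.1 hx
  obtain ⟨-, -, hy_in⟩ := mem_filter.1 hy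
  have hsmall : (W \ A).card < ℓ ∨ (W \ B).card < ℓ := by
    by_contra! h
    exact hns ⟨A, B, hsep, hord.le, h.1, h.2⟩
  rcases hsmall with hA | hB
  · have := hsep.card_filter_adj_le W hyB
    omega
  · have : (W.filter (fun u => E x u)).card ≤ (A ∩ B).card + (W \ B).card := by
      simpa only [inter_comm] using hsep.symm.card_filter_adj_le W hxA
    omega

/-- In a semi-complete digraph, if `W` is not `(k,ℓ)`-separable and every
vertex of `Z ⊆ W` has in-degree and out-degree at least `k + ℓ` within `T[W]`, then no
separation of order less than `k` separates one vertex of `Z` from another: for distinct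
`x, y ∈ Z` there is no separation `(A,B)` of order `< k` with `x ∈ A∖B`, `y ∈ B∖A`. -/
theorem stmt_11 {V : Type*} [Fintype V] [DecidableEq V]
    (E : V → V → Prop) [DecidableRel E]
    (hirr : ∀ v, ¬ E v v)
    (hsc : ∀ u v : V, u ≠ v → E u v ∨ E v u)
    (k ℓ : ℕ) (W : Finset V)
    (hns : ¬ Separable E k ℓ W)
    (Z : Finset V)
    (hZ : Z = W.filter (fun w =>
      k + ℓ ≤ (W.filter (fun u => E w u)).card ∧
      k + ℓ ≤ (W.filter (fun u => E u w)).card)) :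
    ∀ x ∈ Z, ∀ y ∈ Z, x ≠ y →
      ¬ ∃ A B : Finset V, IsSeparationF E A B ∧ (A ∩ B).card < k ∧
        x ∈ A \ B ∧ y ∈ B \ A :=
  stmt_11_general E k ℓ W hns Z hZ
end

section
/- Let T be a semi-complete digraph containing a p-triple (A,B,C) with p > 4k, and let η be an immersion of a digraph H with |H| = k into T minimizing the total sum of lengths of the paths η(E(H)), where all paths are simple. Then every path of η(E(H)) uses at most 2 arcs of the matching {(c_i, a_i) : 1 ≤ i ≤ p} between C and A. -/
/-!
Suppose a path of a length-minimal immersion uses three matching arcs `(c i, a i)`, at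
positions `t₁ < t₂ < t₃`. Since `A` and `C` are disjoint, consecutive ones are at least two
steps apart, so the path needs at least three arcs to go from `a i₁` to `c i₃`. Replacing
this stretch by `a i₁ → b j → c i₃` keeps an immersion and shortens it, as long as no other
path uses the two new arcs. A simple path has at most one arc leaving `a i₁` and at most one
entering `c i₃`, so at most `2 |E(H)| < p` choices of `j` are blocked.
-/

/-- An immersion of a digraph `H` (arcs `EH` with endpoints `src`, `tgt`) into the
digraph `(V, E)`: an injective map on vertices together with pairwise arc-disjoint
directed paths realizing the arcs. -/
def IsImmersion {V VH EH : Type*} (E : V → V → Prop) (src tgt : EH → VH)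
    (ηv : VH → V) (P : EH → List V) : Prop :=
  Function.Injective ηv ∧
  (∀ e, (P e).Chain' E ∧
    (P e).head? = some (ηv (src e)) ∧ (P e).getLast? = some (ηv (tgt e))) ∧
  (∀ e e', e ≠ e' → ∀ p : V × V,
    p ∈ (P e).zip (P e).tail → p ∉ (P e').zip (P e').tail)

/-- Total sum of lengths (numbers of arcs) of a family of paths. -/
def totalLen {V EH : Type*} [Fintype EH] (P : EH → List V) : ℕ :=
  ∑ e, ((P e).length - 1)

namespace List

variable {α : Type*}

theorem mem_zip_tail_iff {l : List α} {x y : α} :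
    (x, y) ∈ l.zip l.tail ↔ ∃ i, l[i]? = some x ∧ l[i + 1]? = some y := by
  simp [mem_iff_getElem?, getElem?_zip_eq_some]

theorem isChain_iff_forall_mem_zip_tail {R : α → α → Prop} {l : List α} :
    l.IsChain R ↔ ∀ x y, (x, y) ∈ l.zip l.tail → R x y := by
  induction l using List.twoStepInduction <;> simp_all [or_imp, forall_and]

theorem Nodup.eq_of_mem_zip_tail_left {l : List α} (hl : l.Nodup) {x y y' : α}
    (h : (x, y) ∈ l.zip l.tail) (h' : (x, y') ∈ l.zip l.tail) : y = y' := by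
  obtain ⟨i, hx, hy⟩ := mem_zip_tail_iff.1 h
  obtain ⟨i', hx', hy'⟩ := mem_zip_tail_iff.1 h'
  obtain rfl : i = i' :=
    (getElem?_inj (getElem?_eq_some_iff.1 hx).1 hl).1 (hx.trans hx'.symm)
  exact Option.some.inj (hy.symm.trans hy')

theorem Nodup.eq_of_mem_zip_tail_right {l : List α} (hl : l.Nodup) {x x' y : α}
    (h : (x, y) ∈ l.zip l.tail) (h' : (x', y) ∈ l.zip l.tail) : x = x' := by
  obtain ⟨i, hx, hy⟩ := mem_zip_tail_iff.1 h
  obtain ⟨i', hx', hy'⟩ := mem_zip_tail_iff.1 h'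
  obtain rfl : i = i' := by
    simpa using (getElem?_inj (getElem?_eq_some_iff.1 hy).1 hl).1 (hy.trans hy'.symm)
  exact Option.some.inj (hx.symm.trans hx')

def bypass (l : List α) (s : ℕ) (z : α) (t : ℕ) : List α :=
  l.take (s + 1) ++ z :: l.drop t

variable {l : List α} {s t : ℕ} {x y z : α}

theorem length_bypass (hs : s < l.length) :
    (l.bypass s z t).length = s + 2 + (l.length - t) := by
  simp only [bypass, length_append, length_take, length_cons, length_drop]
  omega

theorem head?_bypass (hs : s < l.length) : (l.bypass s z t).head? = l.head? := by
  cases l <;> simp_all [bypass]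

theorem getLast?_bypass (ht : t < l.length) : (l.bypass s z t).getLast? = l.getLast? := by
  have hne : l ≠ [] := ne_nil_of_length_pos (by omega)
  simp [bypass, getLast?_cons, getLast?_drop, ht.not_ge, getLast?_eq_some_getLast hne]

theorem mem_zip_tail_bypass (hx : l[s]? = some x) (hy : l[t]? = some y) {q : α × α}
    (hq : q ∈ (l.bypass s z t).zip (l.bypass s z t).tail) :
    q ∈ l.zip l.tail ∨ q = (x, z) ∨ q = (z, y) := by
  let R u v := (u, v) ∈ l.zip l.tail ∨ (u, v) = (x, z) ∨ (u, v) = (z, y)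
  suffices (l.bypass s z t).IsChain R from isChain_iff_forall_mem_zip_tail.1 this q.1 q.2 hq
  have hl : l.IsChain R := isChain_iff_forall_mem_zip_tail.2 fun _ _ h => .inl h
  refine (hl.take _).append (isChain_cons.2 ⟨?_, hl.drop _⟩) ?_
  · simp [R, hy]
  · simp [R, getLast?_take, hx]

end List

section Immersion

variable {V VH EH : Type*} {E : V → V → Prop} {src tgt : EH → VH} {ηv : VH → V}
  {P : EH → List V}

theorem IsImmersion.update [DecidableEq EH] (himm : IsImmersion E src tgt ηv P) {e : EH}
    {l : List V} (hchain : l.IsChain E) (hhead : l.head? = (P e).head?)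
    (hlast : l.getLast? = (P e).getLast?)
    (hfree : ∀ q ∈ l.zip l.tail,
      q ∈ (P e).zip (P e).tail ∨ ∀ e' ≠ e, q ∉ (P e').zip (P e').tail) :
    IsImmersion E src tgt ηv (Function.update P e l) := by
  obtain ⟨hinj, hpath, hdisj⟩ := himm
  have hnew : ∀ e' ≠ e, ∀ q ∈ l.zip l.tail, q ∉ (P e').zip (P e').tail := fun e' he q hq =>
    (hfree q hq).elim (hdisj e e' he.symm q) (· e' he)
  refine ⟨hinj, fun e' => ?_, fun e₁ e₂ hne q hq₁ hq₂ => ?_⟩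
  · rcases eq_or_ne e' e with rfl | he
    · rw [Function.update_self]
      exact ⟨hchain, hhead.trans (hpath e').2.1, hlast.trans (hpath e').2.2⟩
    · simpa [Function.update_of_ne he] using hpath e'
  · rcases eq_or_ne e₁ e with rfl | he₁
    · simp only [Function.update_self, Function.update_of_ne hne.symm] at hq₁ hq₂
      exact hnew e₂ hne.symm q hq₁ hq₂
    rcases eq_or_ne e₂ e with rfl | he₂
    · simp only [Function.update_self, Function.update_of_ne hne] at hq₁ hq₂
      exact hnew e₁ hne q hq₂ hq₁
    simp only [Function.update_of_ne he₁, Function.update_of_ne he₂] at hq₁ hq₂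
    exact hdisj e₁ e₂ hne q hq₁ hq₂

theorem totalLen_update_lt [Fintype EH] [DecidableEq EH] (P : EH → List V) {e : EH}
    {l : List V} (h : l.length - 1 < (P e).length - 1) :
    totalLen (Function.update P e l) < totalLen P := by
  refine Finset.sum_lt_sum (fun e' _ => ?_) ⟨e, Finset.mem_univ e, by simpa using h⟩
  rcases eq_or_ne e' e with rfl | he
  · simpa using h.le
  · simp [Function.update_of_ne he]

theorem IsImmersion.le_add_two_of_forall_totalLen_le [Fintype EH]
    (himm : IsImmersion E src tgt ηv P)
    (hmin : ∀ P', IsImmersion E src tgt ηv P' → totalLen P ≤ totalLen P')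
    {e : EH} {s t : ℕ} {x y z : V} (hx : (P e)[s]? = some x) (hy : (P e)[t]? = some y)
    (hxz : E x z) (hzy : E z y)
    (hfree : ∀ e' ≠ e, (x, z) ∉ (P e').zip (P e').tail ∧ (z, y) ∉ (P e').zip (P e').tail) :
    t ≤ s + 2 := by
  classical
  by_contra! hgap
  have hs : s < (P e).length := (List.getElem?_eq_some_iff.1 hx).1
  have ht : t < (P e).length := (List.getElem?_eq_some_iff.1 hy).1
  have hpath : (P e).IsChain E := (himm.2.1 e).1
  have himm' : IsImmersion E src tgt ηv (Function.update P e ((P e).bypass s z t)) := by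
    refine himm.update ?_ (List.head?_bypass hs) (List.getLast?_bypass ht) fun q hq => ?_
    · refine List.isChain_iff_forall_mem_zip_tail.2 fun u v huv => ?_
      rcases List.mem_zip_tail_bypass hx hy huv with h | h | h
      · exact List.isChain_iff_forall_mem_zip_tail.1 hpath u v h
      · obtain ⟨rfl, rfl⟩ := Prod.mk.inj h
        exact hxz
      · obtain ⟨rfl, rfl⟩ := Prod.mk.inj h
        exact hzy
    rcases List.mem_zip_tail_bypass hx hy hq with h | rfl | rfl
    · exact .inl h
    · exact .inr fun e' he => (hfree e' he).1
    · exact .inr fun e' he => (hfree e' he).2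
  have hshorter := totalLen_update_lt P (e := e) (l := (P e).bypass s z t)
    (by rw [List.length_bypass hs]; omega)
  exact (hmin _ himm').not_gt hshorter

theorem exists_forall_not_mem_zip_tail {ι : Type*} [Fintype ι] [Fintype EH]
    (hP : ∀ e, (P e).Nodup) {f : ι → V} (hf : Function.Injective f)
    (hcard : 2 * Fintype.card EH < Fintype.card ι) (x y : V) :
    ∃ j, ∀ e, (x, f j) ∉ (P e).zip (P e).tail ∧ (f j, y) ∉ (P e).zip (P e).tail := by
  classical
  set out : EH → Finset ι := fun e => {j | (x, f j) ∈ (P e).zip (P e).tail}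
  set inc : EH → Finset ι := fun e => {j | (f j, y) ∈ (P e).zip (P e).tail}
  have hout : ∀ e ∈ Finset.univ, (out e).card ≤ 1 := fun e _ =>
    Finset.card_le_one.2 fun j hj j' hj' => hf <|
      (hP e).eq_of_mem_zip_tail_left (Finset.mem_filter.1 hj).2 (Finset.mem_filter.1 hj').2
  have hinc : ∀ e ∈ Finset.univ, (inc e).card ≤ 1 := fun e _ =>
    Finset.card_le_one.2 fun j hj j' hj' => hf <|
      (hP e).eq_of_mem_zip_tail_right (Finset.mem_filter.1 hj).2 (Finset.mem_filter.1 hj').2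
  have hbad : (Finset.univ.biUnion out ∪ Finset.univ.biUnion inc).card < Fintype.card ι :=
    calc _ ≤ (∑ _ : EH, 1) + ∑ _ : EH, 1 := Finset.card_union_le _ _ |>.trans <| add_le_add
            (Finset.card_biUnion_le.trans (Finset.sum_le_sum hout))
            (Finset.card_biUnion_le.trans (Finset.sum_le_sum hinc))
      _ < Fintype.card ι := by simpa [two_mul] using hcard
  obtain ⟨j, -, hj⟩ := Finset.exists_mem_notMem_of_card_lt_card hbad
  simp only [Finset.mem_union, Finset.mem_biUnion, Finset.mem_filter, Finset.mem_univ,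
    true_and, out, inc, not_or, not_exists] at hj
  exact ⟨j, fun e => ⟨hj.1 e, hj.2 e⟩⟩

theorem IsImmersion.le_add_two_of_two_mul_card_lt [Fintype EH] {ι : Type*} [Fintype ι]
    (himm : IsImmersion E src tgt ηv P) (hsimple : ∀ e, (P e).Nodup)
    (hmin : ∀ P', IsImmersion E src tgt ηv P' → totalLen P ≤ totalLen P')
    {f : ι → V} (hf : Function.Injective f) (hcard : 2 * Fintype.card EH < Fintype.card ι)
    {e : EH} {s t : ℕ} {x y : V} (hx : (P e)[s]? = some x) (hy : (P e)[t]? = some y)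
    (hxf : ∀ j, E x (f j)) (hfy : ∀ j, E (f j) y) :
    t ≤ s + 2 :=
  let ⟨j, hj⟩ := exists_forall_not_mem_zip_tail hsimple hf hcard x y
  himm.le_add_two_of_forall_totalLen_le hmin hx hy (hxf j) (hfy j) fun e' _ => hj e'

variable {p : ℕ} {a b c : Fin p → V}

theorem IsImmersion.le_add_three_of_matching_arcs [Fintype EH]
    (himm : IsImmersion E src tgt ηv P) (hsimple : ∀ e, (P e).Nodup)
    (hmin : ∀ P', IsImmersion E src tgt ηv P' → totalLen P ≤ totalLen P')
    (hbinj : Function.Injective b) (hcard : 2 * Fintype.card EH < p)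
    (hAC : Disjoint (Set.range a) (Set.range c))
    (hab : ∀ i j, E (a i) (b j)) (hbc : ∀ i j, E (b i) (c j))
    {e : EH} {i i' : Fin p} {t t' : ℕ} (ha : (P e)[t + 1]? = some (a i))
    (hc : (P e)[t']? = some (c i')) (hlt : t < t') :
    t + 2 ≤ t' ∧ t' ≤ t + 3 := by
  have hne : t' ≠ t + 1 := by
    rintro rfl
    exact hAC.ne_of_mem (Set.mem_range_self i) (Set.mem_range_self i')
      (Option.some.inj (ha.symm.trans hc))
  refine ⟨by omega, himm.le_add_two_of_two_mul_card_lt hsimple hmin hbinj ?_ ha hc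
    (hab i) (hbc · i')⟩
  rwa [Fintype.card_fin]

end Immersion

theorem stmt_13_general {V : Type*} [DecidableEq V] (E : V → V → Prop)
    (k p : ℕ) (hp : 4 * k < p)
    (a b c : Fin p → V)
    (hbinj : Function.Injective b)
    (hcinj : Function.Injective c)
    (hAC : Disjoint (Set.range a) (Set.range c))
    (hab : ∀ i j : Fin p, E (a i) (b j))
    (hbc : ∀ i j : Fin p, E (b i) (c j))
    {VH EH : Type*} [Fintype VH] [Fintype EH] (src tgt : EH → VH)
    (hk : Fintype.card VH + Fintype.card EH = k)
    (ηv : VH → V) (P : EH → List V)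
    (himm : IsImmersion E src tgt ηv P)
    (hsimple : ∀ e, (P e).Nodup)
    (hmin : ∀ (ηv' : VH → V) (P' : EH → List V),
      IsImmersion E src tgt ηv' P' → totalLen P ≤ totalLen P') :
    ∀ e : EH,
      (Finset.univ.filter
        (fun i : Fin p => (c i, a i) ∈ (P e).zip (P e).tail)).card ≤ 2 := by
  intro e
  have hgap : ∀ {i i' : Fin p} {t t' : ℕ}, (P e)[t + 1]? = some (a i) →
      (P e)[t']? = some (c i') → t < t' → t + 2 ≤ t' ∧ t' ≤ t + 3 :=
    himm.le_add_three_of_matching_arcs hsimple (hmin ηv) hbinj (by omega) hAC hab hbc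
  have hsep : ∀ {i i' t t'}, i ≠ i' → (P e)[t]? = some (c i) → (P e)[t + 1]? = some (a i) →
      (P e)[t']? = some (c i') → (P e)[t' + 1]? = some (a i') →
      t + 2 ≤ t' ∧ t' ≤ t + 3 ∨ t' + 2 ≤ t ∧ t ≤ t' + 3 := by
    intro i i' t t' hii hc ha hc' ha'
    rcases lt_trichotomy t t' with h | rfl | h
    · exact .inl (hgap ha hc' h)
    · exact absurd (hcinj (Option.some.inj (hc.symm.trans hc'))) hii
    · exact .inr (hgap ha' hc h)
  by_contra! h3
  obtain ⟨i₁, h₁, i₂, h₂, i₃, h₃, h₁₂, h₁₃, h₂₃⟩ := Finset.two_lt_card.1 h3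
  simp only [Finset.mem_filter, Finset.mem_univ, true_and, List.mem_zip_tail_iff] at h₁ h₂ h₃
  obtain ⟨t₁, hc₁, ha₁⟩ := h₁
  obtain ⟨t₂, hc₂, ha₂⟩ := h₂
  obtain ⟨t₃, hc₃, ha₃⟩ := h₃
  have := hsep h₁₂ hc₁ ha₁ hc₂ ha₂
  have := hsep h₁₃ hc₁ ha₁ hc₃ ha₃
  have := hsep h₂₃ hc₂ ha₂ hc₃ ha₃
  omega

/-- If a semi-complete digraph `T` contains a `p`-triple `(A,B,C)` with
`p > 4k`, and `η` is an immersion of a digraph `H` with `|H| = k` into `T` minimizing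
the total sum of lengths of its (simple) paths, then every path of the immersion uses at
most 2 arcs of the matching `{(c_i, a_i)}` between `C` and `A`. -/
theorem stmt_13 {V : Type*} [Fintype V] [DecidableEq V] (E : V → V → Prop)
    (hirr : ∀ v, ¬ E v v)
    (hsc : ∀ u v : V, u ≠ v → E u v ∨ E v u)
    (k p : ℕ) (hp : 4 * k < p)
    (a b c : Fin p → V)
    (hainj : Function.Injective a) (hbinj : Function.Injective b)
    (hcinj : Function.Injective c)
    (hAB : Disjoint (Set.range a) (Set.range b))
    (hBC : Disjoint (Set.range b) (Set.range c))
    (hAC : Disjoint (Set.range a) (Set.range c))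
    (hab : ∀ i j : Fin p, E (a i) (b j))
    (hbc : ∀ i j : Fin p, E (b i) (c j))
    (hca : ∀ i : Fin p, E (c i) (a i))
    {VH EH : Type*} [Fintype VH] [Fintype EH] (src tgt : EH → VH)
    (hk : Fintype.card VH + Fintype.card EH = k)
    (ηv : VH → V) (P : EH → List V)
    (himm : IsImmersion E src tgt ηv P)
    (hsimple : ∀ e, (P e).Nodup)
    (hmin : ∀ (ηv' : VH → V) (P' : EH → List V),
      IsImmersion E src tgt ηv' P' → totalLen P ≤ totalLen P') :
    ∀ e : EH,
      (Finset.univ.filter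
        (fun i : Fin p => (c i, a i) ∈ (P e).zip (P e).tail)).card ≤ 2 :=
  stmt_13_general E k p hp a b c hbinj hcinj hAC hab hbc src tgt hk ηv P himm hsimple hmin
end

section
/- There exists a family F of subsets of a universe U of size n, of cardinality 2^{O(min(p,q)·log(p+q))}·log n, such that for all disjoint sets A, B ⊆ U with |A| ≤ p and |B| ≤ q, there exists R ∈ F with A ⊆ R and B ∩ R = ∅. -/
/-!
Colour the universe with `p + q` colours, `p` of them red, and let `R` be the red part. Out of
all `(p + q) ^ n` colourings, those separating a fixed pair `(A, B)` (with `A ⊆ R` and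
`B ∩ R = ∅`) form a fraction `(p / (p + q)) ^ #A * (q / (p + q)) ^ #B ≥ 1 / m`, where
`m = (p + q + 1) * (p + q).choose p`: indeed `(p + q).choose p * p ^ p * q ^ q` is the largest
of the `p + q + 1` terms of the binomial expansion of `(p + q) ^ (p + q)`. There are at most
`N = (n + 1) ^ (p + q)` pairs, and since `(1 - 1 / m) ^ m < 1 / 2`, a union bound shows that some
`m * (log₂ N + 1)` colourings separate all pairs at once. Finally
`m ≤ 2 ^ ((min p q + 1) * (log₂ (p + q) + 1))` and
`log₂ N + 1 ≤ (log₂ n + 1) * (p + q + 1)`.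
-/

open Finset

theorem exists_hitting_finset_of_card_le_mul {α β : Type*} [Fintype β] [Nonempty β]
    [DecidableEq β] (T : α → Finset β) (P : Finset α) (m t : ℕ)
    (hT : ∀ a ∈ P, Fintype.card β ≤ m * #(T a)) (ht : (m - 1) ^ t * #P < m ^ t) :
    ∃ F : Finset β, #F ≤ t ∧ ∀ a ∈ P, ∃ b ∈ F, b ∈ T a := by
  by_contra! h
  have hmiss : ∀ a ∈ P, m * #(T a)ᶜ ≤ (m - 1) * Fintype.card β := by
    intro a ha
    rw [card_compl, Nat.sub_one_mul, Nat.mul_sub]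
    have := hT a ha
    omega
  have hunion : (univ : Finset (Fin t → β)) ⊆
      P.biUnion fun a => Fintype.piFinset fun _ => (T a)ᶜ := by
    intro f _
    obtain ⟨a, ha, hf⟩ := h (univ.image f) (card_image_le.trans (by simp))
    exact mem_biUnion.2
      ⟨a, ha, Fintype.mem_piFinset.2 fun i => mem_compl.2 (hf (f i) (by simp))⟩
  have hcount : m ^ t * Fintype.card β ^ t ≤ (m - 1) ^ t * #P * Fintype.card β ^ t :=
    calc m ^ t * Fintype.card β ^ t = m ^ t * #(univ : Finset (Fin t → β)) := by simp
      _ ≤ m ^ t * ∑ a ∈ P, #(T a)ᶜ ^ t := by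
        gcongr
        refine (card_le_card hunion).trans (card_biUnion_le.trans_eq ?_)
        simp
      _ = ∑ a ∈ P, (m * #(T a)ᶜ) ^ t := by simp only [mul_sum, mul_pow]
      _ ≤ ∑ a ∈ P, ((m - 1) * Fintype.card β) ^ t :=
        sum_le_sum fun a ha => Nat.pow_le_pow_left (hmiss a ha) t
      _ = (m - 1) ^ t * #P * Fintype.card β ^ t := by rw [sum_const, smul_eq_mul, mul_pow]; ring
  exact absurd hcount (not_le.2 (Nat.mul_lt_mul_of_pos_right ht (pow_pos Fintype.card_pos t)))

theorem two_mul_pow_lt_succ_pow (e : ℕ) : 2 * e ^ (e + 1) < (e + 1) ^ (e + 1) := by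
  have hbernoulli := pow_add_mul_le_add_pow (a := e) (b := 1) (by simp) (by simp) (e + 1)
  simp only [add_tsub_cancel_right, mul_one, Nat.cast_id] at hbernoulli
  have hpos : 0 < e ^ e := by rcases e with _ | e <;> simp
  calc 2 * e ^ (e + 1) = e ^ (e + 1) + e * e ^ e := by ring
    _ < e ^ (e + 1) + (e + 1) * e ^ e :=
        Nat.add_lt_add_left (Nat.mul_lt_mul_of_pos_right (Nat.lt_succ_self e) hpos) _
    _ ≤ _ := hbernoulli

theorem pred_pow_mul_mul_lt_pow_mul {m N s : ℕ} (hm : 0 < m) (hN : N < 2 ^ s) :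
    (m - 1) ^ (m * s) * N < m ^ (m * s) := by
  obtain ⟨e, rfl⟩ : ∃ e, m = e + 1 := ⟨m - 1, by omega⟩
  rcases Nat.eq_zero_or_pos s with rfl | hs
  · simpa using hN
  rw [add_tsub_cancel_right, pow_mul, pow_mul]
  calc (e ^ (e + 1)) ^ s * N ≤ (e ^ (e + 1)) ^ s * 2 ^ s := by gcongr
    _ = (2 * e ^ (e + 1)) ^ s := by rw [mul_pow, mul_comm]
    _ < _ := Nat.pow_lt_pow_left (two_mul_pow_lt_succ_pow e) hs.ne'

def binomTerm (p q i : ℕ) : ℕ := (p + q).choose i * (p ^ i * q ^ (p + q - i))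

theorem sum_range_binomTerm (p q : ℕ) :
    ∑ i ∈ range (p + q + 1), binomTerm p q i = (p + q) ^ (p + q) := by
  rw [add_pow]; exact sum_congr rfl fun i _ => by rw [binomTerm, Nat.cast_id]; ring

theorem binomTerm_succ_mul {p q i : ℕ} (hi : i < p + q) :
    binomTerm p q (i + 1) * (q * (i + 1)) = binomTerm p q i * (p * (p + q - i)) := by
  obtain ⟨d, hd, hd'⟩ : ∃ d, p + q - i = d + 1 ∧ p + q - (i + 1) = d :=
    ⟨p + q - (i + 1), by omega⟩
  have := Nat.choose_succ_right_eq (p + q) i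
  rw [binomTerm, binomTerm, hd, hd'] at *
  calc _ = (p + q).choose (i + 1) * (i + 1) * (p ^ (i + 1) * q ^ (d + 1)) := by ring
    _ = _ := by rw [this]; ring

theorem binomTerm_le_binomTerm_self (p q i : ℕ) : binomTerm p q i ≤ binomTerm p q p := by
  rcases le_total i p with hip | hpi
  · refine Nat.decreasingInduction (motive := fun j _ => binomTerm p q j ≤ binomTerm p q p)
      (fun j hj ih => le_trans ?_ ih) le_rfl hip
    refine Nat.le_of_mul_le_mul_right ((binomTerm_succ_mul (by omega)).symm.le.trans ?_)
      (c := p * (p + q - j)) (Nat.mul_pos (by omega) (by omega))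
    exact Nat.mul_le_mul_left _ (by rw [mul_comm p]; exact Nat.mul_le_mul (by omega) (by omega))
  · refine antitoneOn_nat_Ici_of_succ_le (fun j hj => ?_) (le_refl p) hpi hpi
    rcases lt_or_ge j (p + q) with hjk | hjk
    · refine Nat.le_of_mul_le_mul_right ((binomTerm_succ_mul hjk).le.trans ?_)
        (c := q * (j + 1)) (Nat.mul_pos (by omega) (by omega))
      exact Nat.mul_le_mul_left _ (by rw [mul_comm p]; exact Nat.mul_le_mul (by omega) (by omega))
    · simp [binomTerm, Nat.choose_eq_zero_of_lt (show p + q < j + 1 by omega)]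

theorem pow_le_succ_mul_choose_mul (p q : ℕ) :
    (p + q) ^ (p + q) ≤ (p + q + 1) * (p + q).choose p * (p ^ p * q ^ q) := by
  calc (p + q) ^ (p + q) = ∑ i ∈ range (p + q + 1), binomTerm p q i :=
        (sum_range_binomTerm p q).symm
    _ ≤ ∑ i ∈ range (p + q + 1), binomTerm p q p :=
        sum_le_sum fun i _ => binomTerm_le_binomTerm_self p q i
    _ = _ := by simp [binomTerm, mul_assoc]

theorem pow_add_le_succ_mul_choose_mul {p q a b : ℕ} (ha : a ≤ p) (hb : b ≤ q) :
    (p + q) ^ (a + b) ≤ (p + q + 1) * (p + q).choose p * (p ^ a * q ^ b) := by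
  have hpos : 0 < p ^ (p - a) * q ^ (q - b) := by
    apply Nat.mul_pos <;> apply Nat.pow_pos_iff.2 <;> omega
  refine Nat.le_of_mul_le_mul_right ?_ hpos
  calc (p + q) ^ (a + b) * (p ^ (p - a) * q ^ (q - b))
      ≤ (p + q) ^ (a + b) * ((p + q) ^ (p - a) * (p + q) ^ (q - b)) := by gcongr <;> omega
    _ = (p + q) ^ (p + q) := by rw [← pow_add, ← pow_add]; congr 1; omega
    _ ≤ (p + q + 1) * (p + q).choose p * (p ^ p * q ^ q) := pow_le_succ_mul_choose_mul p q
    _ = _ := by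
      rw [← Nat.add_sub_cancel' ha, ← Nat.add_sub_cancel' hb]
      simp only [pow_add, Nat.add_sub_cancel_left]; ring

theorem card_filter_subset_and_disjoint {U V : Type*} [Fintype U] [DecidableEq U]
    [Fintype V] [DecidableEq V] (S : Finset V) {A B : Finset U} (hAB : Disjoint A B) :
    #{g : U → V | A ⊆ univ.filter (g · ∈ S) ∧ Disjoint B (univ.filter (g · ∈ S))} =
      #S ^ #A * #Sᶜ ^ #B * Fintype.card V ^ (Fintype.card U - (#A + #B)) := by
  set T : U → Finset V := fun x => if x ∈ A then S else if x ∈ B then Sᶜ else univ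
  trans #(Fintype.piFinset T)
  · congr 1
    ext g
    simp only [mem_filter, mem_univ, true_and, Fintype.mem_piFinset, subset_iff, disjoint_left]
    constructor
    · rintro ⟨hA, hB⟩ x
      simp only [T]
      split_ifs with hxA hxB
      exacts [hA hxA, mem_compl.2 (hB hxB), mem_univ _]
    · intro h
      refine ⟨fun x hx => by simpa [T, hx] using h x, fun x hx => ?_⟩
      simpa [T, hx, disjoint_right.1 hAB hx] using h x
  rw [Fintype.card_piFinset]
  simp only [T, apply_ite card, prod_ite, prod_const, card_univ]
  have hA : ({x | x ∈ A} : Finset U) = A := by ext; simp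
  have hB : ({x ∈ {x | x ∉ A} | x ∈ B} : Finset U) = B := by
    ext x; simpa using fun hx => disjoint_right.1 hAB hx
  have hrest : #({x ∈ {x | x ∉ A} | x ∉ B} : Finset U) = Fintype.card U - (#A + #B) := by
    rw [filter_filter, ← card_union_of_disjoint hAB, ← card_compl]; congr; ext; simp
  rw [hA, hB, hrest, mul_assoc]

theorem card_fun_le_mul_card_filter_subset_and_disjoint {U V : Type*} [Fintype U] [DecidableEq U]
    [Fintype V] [DecidableEq V] (S : Finset V) {A B : Finset U} (hAB : Disjoint A B)
    (hA : #A ≤ #S) (hB : #B ≤ #Sᶜ) :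
    Fintype.card (U → V) ≤ (Fintype.card V + 1) * (Fintype.card V).choose #S *
      #{g : U → V | A ⊆ univ.filter (g · ∈ S) ∧ Disjoint B (univ.filter (g · ∈ S))} := by
  have hAB_le : #A + #B ≤ Fintype.card U := by
    rw [← card_union_of_disjoint hAB]; exact card_le_univ _
  rw [card_filter_subset_and_disjoint S hAB, Fintype.card_fun, ← card_add_card_compl S]
  calc (#S + #Sᶜ) ^ Fintype.card U
      = (#S + #Sᶜ) ^ (#A + #B) * (#S + #Sᶜ) ^ (Fintype.card U - (#A + #B)) := by
        rw [← pow_add, Nat.add_sub_cancel' hAB_le]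
    _ ≤ (#S + #Sᶜ + 1) * (#S + #Sᶜ).choose #S * (#S ^ #A * #Sᶜ ^ #B) *
          (#S + #Sᶜ) ^ (Fintype.card U - (#A + #B)) :=
        Nat.mul_le_mul_right _ (pow_add_le_succ_mul_choose_mul hA hB)
    _ = _ := by ring

theorem card_filter_card_le_le_pow (α : Type*) [Fintype α] (p : ℕ) :
    #{A : Finset α | #A ≤ p} ≤ (Fintype.card α + 1) ^ p := by
  classical
  calc #{A : Finset α | #A ≤ p}
      ≤ #((range (p + 1)).biUnion fun i => powersetCard i (univ : Finset α)) :=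
        card_le_card fun A hA => by simpa [Nat.lt_succ_iff] using hA
    _ ≤ ∑ i ∈ range (p + 1), (Fintype.card α).choose i :=
        card_biUnion_le.trans_eq (by simp [card_powersetCard])
    _ ≤ ∑ i ∈ range (p + 1), Fintype.card α ^ i * 1 ^ (p - i) * p.choose i :=
        sum_le_sum fun i hi => by
          simpa using Nat.mul_le_mul (Nat.choose_le_pow _ i)
            (Nat.choose_pos (Nat.lt_succ_iff.1 (mem_range.1 hi)))
    _ = (Fintype.card α + 1) ^ p := (add_pow _ 1 p).symm

theorem card_filter_disjoint_card_le_le_pow (α : Type*) [Fintype α] [DecidableEq α] (p q : ℕ) :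
    #{AB : Finset α × Finset α | Disjoint AB.1 AB.2 ∧ #AB.1 ≤ p ∧ #AB.2 ≤ q} ≤
      (Fintype.card α + 1) ^ (p + q) :=
  calc _ ≤ #(({A | #A ≤ p} : Finset (Finset α)) ×ˢ ({B | #B ≤ q} : Finset _)) :=
        card_le_card fun AB hAB => by simp_all
    _ ≤ _ := by
      rw [card_product, pow_add]
      exact Nat.mul_le_mul (card_filter_card_le_le_pow α p) (card_filter_card_le_le_pow α q)

theorem succ_mul_choose_le_two_pow (p q : ℕ) :
    (p + q + 1) * (p + q).choose p ≤ 2 ^ ((min p q + 1) * (Nat.log 2 (p + q) + 1)) := by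
  have hchoose : (p + q).choose p ≤ (p + q) ^ min p q := by
    rcases le_total p q with h | h
    · rw [min_eq_left h]; exact Nat.choose_le_pow _ _
    · rw [min_eq_right h, Nat.choose_symm_add]; exact Nat.choose_le_pow _ _
  have hlog : p + q < 2 ^ (Nat.log 2 (p + q) + 1) := Nat.lt_pow_succ_log_self one_lt_two _
  calc (p + q + 1) * (p + q).choose p
      ≤ 2 ^ (Nat.log 2 (p + q) + 1) * (2 ^ (Nat.log 2 (p + q) + 1)) ^ min p q :=
        Nat.mul_le_mul hlog (hchoose.trans (Nat.pow_le_pow_left hlog.le _))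
    _ = _ := by rw [← pow_mul, ← pow_add]; ring_nf

theorem log_add_one_le_mul_of_le_pow {N n k : ℕ} (hN : N ≤ (n + 1) ^ k) :
    Nat.log 2 N + 1 ≤ (Nat.log 2 n + 1) * (k + 1) := by
  have hn : n + 1 ≤ 2 ^ (Nat.log 2 n + 1) := Nat.lt_pow_succ_log_self one_lt_two n
  have hlog : Nat.log 2 N ≤ (Nat.log 2 n + 1) * k := by
    calc Nat.log 2 N ≤ Nat.log 2 (2 ^ ((Nat.log 2 n + 1) * k)) :=
          Nat.log_mono_right (hN.trans (by rw [pow_mul]; gcongr))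
      _ = _ := Nat.log_pow one_lt_two _
  nlinarith

theorem succ_mul_choose_mul_log_add_one_le {n p q N : ℕ} (hN : N ≤ (n + 1) ^ (p + q)) :
    (p + q + 1) * (p + q).choose p * (Nat.log 2 N + 1) ≤
      2 ^ (2 * (min p q + 1) * (Nat.log 2 (p + q) + 1)) * (Nat.log 2 n + 1) := by
  set L := Nat.log 2 (p + q) + 1
  calc (p + q + 1) * (p + q).choose p * (Nat.log 2 N + 1)
      ≤ 2 ^ ((min p q + 1) * L) * ((Nat.log 2 n + 1) * (p + q + 1)) :=
        Nat.mul_le_mul (succ_mul_choose_le_two_pow p q) (log_add_one_le_mul_of_le_pow hN)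
    _ ≤ 2 ^ ((min p q + 1) * L) * ((Nat.log 2 n + 1) * 2 ^ L) := by
        gcongr; exact Nat.lt_pow_succ_log_self one_lt_two _
    _ = 2 ^ ((min p q + 2) * L) * (Nat.log 2 n + 1) := by ring
    _ ≤ _ := by gcongr <;> omega

theorem exists_finset_card_le_forall_subset_inter_eq_empty (U : Type*) [Fintype U]
    [DecidableEq U] {p q : ℕ} (hpq : 0 < p + q) :
    ∃ F : Finset (Finset U),
      #F ≤ (p + q + 1) * (p + q).choose p * (Nat.log 2 ((Fintype.card U + 1) ^ (p + q)) + 1) ∧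
      ∀ A B : Finset U, Disjoint A B → #A ≤ p → #B ≤ q →
        ∃ R ∈ F, A ⊆ R ∧ B ∩ R = ∅ := by
  have : Nonempty (Fin (p + q)) := ⟨⟨0, hpq⟩⟩
  set S : Finset (Fin (p + q)) := {j | (j : ℕ) < p}
  have hS : #S = p := by simp [S, Fin.card_filter_val_lt]
  have hSc : #Sᶜ = q := by rw [card_compl, hS, Fintype.card_fin]; omega
  set P : Finset (Finset U × Finset U) := {AB | Disjoint AB.1 AB.2 ∧ #AB.1 ≤ p ∧ #AB.2 ≤ q}
  set m := (p + q + 1) * (p + q).choose p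
  set T : Finset U × Finset U → Finset (U → Fin (p + q)) :=
    fun AB => {g | AB.1 ⊆ univ.filter (g · ∈ S) ∧ Disjoint AB.2 (univ.filter (g · ∈ S))}
  have hdense : ∀ AB ∈ P, Fintype.card (U → Fin (p + q)) ≤ m * #(T AB) := by
    intro AB hAB
    simp only [P, mem_filter, mem_univ, true_and] at hAB
    simpa [hS] using card_fun_le_mul_card_filter_subset_and_disjoint S hAB.1 (hS.symm ▸ hAB.2.1)
      (hSc.symm ▸ hAB.2.2)
  obtain ⟨G, hG, hcov⟩ := exists_hitting_finset_of_card_le_mul T P m (m * (Nat.log 2 #P + 1))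
    hdense (pred_pow_mul_mul_lt_pow_mul (Nat.mul_pos (by omega) (Nat.choose_pos (by omega)))
      (Nat.lt_pow_succ_log_self one_lt_two _))
  refine ⟨G.image fun g => univ.filter (g · ∈ S), card_image_le.trans (hG.trans ?_),
    fun A B hAB hA hB => ?_⟩
  · exact Nat.mul_le_mul_left _ (Nat.add_le_add_right
      (Nat.log_mono_right (card_filter_disjoint_card_le_le_pow U p q)) 1)
  · obtain ⟨g, hg, hgAB⟩ := hcov (A, B) (by simp [P, hAB, hA, hB])
    obtain ⟨hgA, hgB⟩ := (mem_filter.1 hgAB).2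
    exact ⟨_, mem_image_of_mem _ hg, hgA, disjoint_iff_inter_eq_empty.1 hgB⟩

/-- There exists a family `F` of subsets of a universe of size `n`, of
cardinality `2^{O(min(p,q)·log(p+q))}·log n`, such that for all disjoint `A, B` with
`|A| ≤ p`, `|B| ≤ q`, some `R ∈ F` satisfies `A ⊆ R` and `B ∩ R = ∅`. The `O(·)` is
expressed by a universal constant `C`. -/
theorem stmt_16 :
    ∃ C : ℕ, ∀ n p q : ℕ, ∃ F : Finset (Finset (Fin n)),
      F.card ≤ 2 ^ (C * (min p q + 1) * (Nat.log 2 (p + q) + 1)) * (Nat.log 2 n + 1) ∧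
      ∀ A B : Finset (Fin n), Disjoint A B → A.card ≤ p → B.card ≤ q →
        ∃ R ∈ F, A ⊆ R ∧ B ∩ R = ∅ := by
  refine ⟨2, fun n p q => ?_⟩
  rcases Nat.eq_zero_or_pos (p + q) with hpq | hpq
  · refine ⟨{∅}, by simp [Nat.one_le_iff_ne_zero], fun A B _ hA _ => ?_⟩
    exact ⟨∅, mem_singleton_self _, by simp [card_eq_zero.1 (by omega : #A = 0)]⟩
  obtain ⟨F, hF, hsep⟩ := exists_finset_card_le_forall_subset_inter_eq_empty (Fin n) hpq
  refine ⟨F, hF.trans ?_, hsep⟩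
  simpa using succ_mul_choose_mul_log_add_one_le (n := n) le_rfl
end

section
/- For the semi-complete digraph T_n on 2n vertices a_1,…,a_n, b_1,…,b_n defined below, there is exactly one pair of vertex-disjoint paths (P_1, P_2) with P_1 from a_1 to a_n and P_2 from b_n to b_1, namely P_1 = (a_1, a_2, …, a_n) and P_2 = (b_n, b_{n−1}, …, b_1); moreover these two paths together use every vertex of T_n. -/
/-- The arc relation of the semi-complete digraph `T_n`: vertices `a_i = Sum.inl i`,
`b_i = Sum.inr i` (0-based indices), with arcs `(a_i, a_{i+1})`; `(a_j, a_i)` for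
`i + 1 < j`; `(b_{i+1}, b_i)`; `(b_j, b_i)` for `i > j + 1`; `(a_i, b_i)`; and
`(b_j, a_i)` for `i ≠ j`. -/
def TnE (n : ℕ) : (Fin n ⊕ Fin n) → (Fin n ⊕ Fin n) → Prop
  | Sum.inl x, Sum.inl y => (y : ℕ) = (x : ℕ) + 1 ∨ (y : ℕ) + 1 < (x : ℕ)
  | Sum.inr x, Sum.inr y => (x : ℕ) = (y : ℕ) + 1 ∨ (x : ℕ) + 1 < (y : ℕ)
  | Sum.inl x, Sum.inr y => x = y
  | Sum.inr x, Sum.inl y => x ≠ y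

/-- `l` is a (simple) directed path from `u` to `v` in the digraph `E`. -/
def IsPathFrom {V : Type*} (E : V → V → Prop) (u v : V) (l : List V) : Prop :=
  l.Chain' E ∧ l.Nodup ∧ l.head? = some u ∧ l.getLast? = some v

/-!
Peel off the lowest level. Let every vertex of two disjoint paths `a_lo ⇝ a_hi` and
`b_hi ⇝ b_lo` have index at least `lo`. The only arcs leaving `a_lo` towards such vertices go
to `a_{lo+1}` and to `b_lo`, and `b_lo` lies on the second path; dually the only arcs entering
`b_lo` come from `a_lo` and `b_{lo+1}`. So the paths continue through `a_{lo+1}` and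
`b_{lo+1}`, and what remains is the same situation with all indices at least `lo + 1`.
The induction runs in the infinite digraph on `ℕ ⊕ ℕ` with the same arc rule, of which `T_n`
is the part with indices below `n`.
-/

open Function Sum

namespace IsPathFrom

variable {V W : Type*} {E : V → V → Prop} {u v : V} {l : List V}

theorem head_mem (h : IsPathFrom E u v l) : u ∈ l := List.mem_of_mem_head? h.2.2.1

theorem getLast_mem (h : IsPathFrom E u v l) : v ∈ l := List.mem_of_mem_getLast? h.2.2.2

theorem eq_singleton (h : IsPathFrom E u u l) : l = [u] := by
  obtain ⟨-, hnd, hh, hl⟩ := h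
  match l, hh with
  | [_], rfl => rfl
  | _ :: _ :: _, rfl =>
    rw [List.getLast?_cons_cons] at hl
    exact absurd (List.mem_of_mem_getLast? hl) (List.nodup_cons.mp hnd).1

theorem reverse (h : IsPathFrom E u v l) : IsPathFrom (flip E) v u l.reverse := by
  obtain ⟨hc, hnd, hh, hl⟩ := h
  exact ⟨List.isChain_reverse.mpr hc, List.nodup_reverse.mpr hnd, by simpa using hl,
    by simpa using hh⟩

theorem exists_eq_cons (h : IsPathFrom E u v l) (huv : u ≠ v) :
    ∃ w l', l = u :: l' ∧ E u w ∧ IsPathFrom E w v l' := by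
  obtain ⟨hc, hnd, hh, hl⟩ := h
  match l, hh with
  | [_], rfl => exact absurd (by simpa using hl) huv
  | _ :: w :: t, rfl =>
    obtain ⟨huw, hc'⟩ := List.isChain_cons_cons.mp hc
    exact ⟨w, w :: t, rfl, huw, hc', hnd.of_cons, rfl, by rwa [List.getLast?_cons_cons] at hl⟩

theorem exists_eq_concat (h : IsPathFrom E u v l) (huv : u ≠ v) :
    ∃ w l', l = l' ++ [v] ∧ E w v ∧ IsPathFrom E u w l' := by
  obtain ⟨w, l', hl, hvw, h'⟩ := h.reverse.exists_eq_cons huv.symm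
  refine ⟨w, l'.reverse, ?_, hvw, by simpa using h'.reverse⟩
  rw [← List.reverse_reverse l, hl, List.reverse_cons]

theorem map {E' : W → W → Prop} {f : V → W} (hf : Injective f)
    (hE : ∀ x y, E x y → E' (f x) (f y)) (h : IsPathFrom E u v l) :
    IsPathFrom E' (f u) (f v) (l.map f) := by
  obtain ⟨hc, hnd, hh, hl⟩ := h
  exact ⟨(List.isChain_map f).mpr (hc.imp hE), hnd.map hf, by simp [hh], by simp [hl]⟩

end IsPathFrom

def TinfE : ℕ ⊕ ℕ → ℕ ⊕ ℕ → Prop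
  | inl x, inl y => y = x + 1 ∨ y + 1 < x
  | inr x, inr y => x = y + 1 ∨ x + 1 < y
  | inl x, inr y => x = y
  | inr x, inl y => x ≠ y

def level : ℕ ⊕ ℕ → ℕ := Sum.elim id id

theorem tnE_iff_tinfE (n : ℕ) (u v : Fin n ⊕ Fin n) :
    TnE n u v ↔ TinfE (u.map Fin.val Fin.val) (v.map Fin.val Fin.val) := by
  cases u <;> cases v <;> simp [TnE, TinfE, Fin.ext_iff]

theorem level_succ_le {lo : ℕ} {x : ℕ ⊕ ℕ} (hx : lo ≤ level x) (ha : x ≠ inl lo)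
    (hb : x ≠ inr lo) : lo + 1 ≤ level x := by
  cases x <;> simp_all [level] <;> omega

theorem TinfE.eq_inl_succ {lo : ℕ} {w : ℕ ⊕ ℕ} (h : TinfE (inl lo) w) (hw : lo ≤ level w)
    (hb : w ≠ inr lo) : w = inl (lo + 1) := by
  rcases w with y | y <;>
    simp only [TinfE, level, Sum.elim_inl, Sum.elim_inr, id, ne_eq, inl.injEq, inr.injEq,
      reduceCtorEq] at * <;> omega

theorem TinfE.eq_inr_succ {lo : ℕ} {w : ℕ ⊕ ℕ} (h : TinfE w (inr lo)) (hw : lo ≤ level w)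
    (ha : w ≠ inl lo) : w = inr (lo + 1) := by
  rcases w with y | y <;>
    simp only [TinfE, level, Sum.elim_inl, Sum.elim_inr, id, ne_eq, inl.injEq, inr.injEq,
      reduceCtorEq] at * <;> omega

theorem TinfE.eq_of_isPathFrom_of_disjoint {d lo : ℕ} {Q₁ Q₂ : List (ℕ ⊕ ℕ)}
    (h₁ : IsPathFrom TinfE (inl lo) (inl (lo + d)) Q₁)
    (h₂ : IsPathFrom TinfE (inr (lo + d)) (inr lo) Q₂)
    (hdisj : Q₁.Disjoint Q₂) (hlo : ∀ x ∈ Q₁ ++ Q₂, lo ≤ level x) :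
    Q₁ = (List.range' lo (d + 1)).map inl ∧ Q₂ = (List.range' lo (d + 1)).reverse.map inr := by
  induction d generalizing lo Q₁ Q₂ with
  | zero => exact ⟨h₁.eq_singleton, h₂.eq_singleton⟩
  | succ d ih =>
    obtain ⟨w₁, Q₁, rfl, hE₁, hQ₁⟩ := h₁.exists_eq_cons (by simp)
    obtain ⟨w₂, Q₂, rfl, hE₂, hQ₂⟩ := h₂.exists_eq_concat (by simp)
    have ha₁ : inl lo ∉ Q₁ := (List.nodup_cons.mp h₁.2.1).1
    have hb₂ : inr lo ∉ Q₂ := fun h ↦ List.disjoint_of_nodup_append h₂.2.1 h (by simp)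
    have hb₁ : inr lo ∉ Q₁ := fun h ↦ hdisj (.tail _ h) (by simp)
    have ha₂ : inl lo ∉ Q₂ := fun h ↦ hdisj List.mem_cons_self (List.mem_append_left _ h)
    have hw₁ : w₁ = inl (lo + 1) :=
      hE₁.eq_inl_succ (hlo _ (by simp [hQ₁.head_mem])) (ne_of_mem_of_not_mem hQ₁.head_mem hb₁)
    have hw₂ : w₂ = inr (lo + 1) :=
      hE₂.eq_inr_succ (hlo _ (by simp [hQ₂.getLast_mem]))
        (ne_of_mem_of_not_mem hQ₂.getLast_mem ha₂)
    have hlo' : ∀ x ∈ Q₁ ++ Q₂, lo + 1 ≤ level x := by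
      intro x hx
      rw [List.mem_append] at hx
      refine level_succ_le (hlo x ?_) ?_ ?_
      · simp only [List.mem_append, List.mem_cons]; tauto
      · rintro rfl; tauto
      · rintro rfl; tauto
    rw [show lo + (d + 1) = lo + 1 + d by omega] at hQ₁ hQ₂
    subst hw₁ hw₂
    obtain ⟨rfl, rfl⟩ := ih hQ₁ hQ₂
      (fun _ hx h ↦ hdisj (.tail _ hx) (List.mem_append_left _ h)) hlo'
    simp [List.range'_succ]

theorem isPathFrom_map_inl_finRange (n : ℕ) :
    IsPathFrom (TnE (n + 1)) (inl 0) (inl (Fin.last n)) ((List.finRange (n + 1)).map inl) := by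
  refine ⟨(List.isChain_map inl).mpr (List.isChain_iff_getElem.mpr fun i _ ↦ by simp [TnE]),
    (List.nodup_finRange _).map inl_injective, by simp [List.finRange_succ],
    by simp [List.finRange_succ_last]⟩

theorem isPathFrom_map_inr_reverse_finRange (n : ℕ) :
    IsPathFrom (TnE (n + 1)) (inr (Fin.last n)) (inr 0)
      ((List.finRange (n + 1)).reverse.map inr) := by
  refine ⟨?_, (List.nodup_reverse.mpr (List.nodup_finRange _)).map inr_injective,
    by simp [List.finRange_succ_last], by simp [List.finRange_succ]⟩
  show List.IsChain _ _
  rw [List.map_reverse, List.isChain_reverse, List.isChain_map, List.isChain_iff_getElem]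
  intro i _
  simp [TnE]

/-- In `T_{n+1}` there is exactly one pair of vertex-disjoint paths
`(P₁, P₂)` with `P₁` from `a_1` to `a_n` and `P₂` from `b_n` to `b_1`, namely
`P₁ = (a_1, …, a_n)` and `P₂ = (b_n, …, b_1)`; together they use every vertex. -/
theorem stmt_17 (n : ℕ) :
    (IsPathFrom (TnE (n + 1)) (Sum.inl 0) (Sum.inl (Fin.last n))
        ((List.finRange (n + 1)).map Sum.inl) ∧
      IsPathFrom (TnE (n + 1)) (Sum.inr (Fin.last n)) (Sum.inr 0)
        ((List.finRange (n + 1)).reverse.map Sum.inr) ∧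
      (∀ x ∈ (List.finRange (n + 1)).map (Sum.inl : Fin (n+1) → Fin (n+1) ⊕ Fin (n+1)),
        x ∉ (List.finRange (n + 1)).reverse.map Sum.inr) ∧
      (∀ v : Fin (n + 1) ⊕ Fin (n + 1),
        v ∈ (List.finRange (n + 1)).map Sum.inl ∨
        v ∈ (List.finRange (n + 1)).reverse.map Sum.inr)) ∧
    ∀ Q₁ Q₂ : List (Fin (n + 1) ⊕ Fin (n + 1)),
      IsPathFrom (TnE (n + 1)) (Sum.inl 0) (Sum.inl (Fin.last n)) Q₁ →
      IsPathFrom (TnE (n + 1)) (Sum.inr (Fin.last n)) (Sum.inr 0) Q₂ →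
      (∀ x ∈ Q₁, x ∉ Q₂) →
      Q₁ = (List.finRange (n + 1)).map Sum.inl ∧
      Q₂ = (List.finRange (n + 1)).reverse.map Sum.inr := by
  refine ⟨⟨isPathFrom_map_inl_finRange n, isPathFrom_map_inr_reverse_finRange n, by simp,
    by rintro (i | i) <;> simp⟩, fun Q₁ Q₂ h₁ h₂ hdisj ↦ ?_⟩
  let f : Fin (n + 1) ⊕ Fin (n + 1) → ℕ ⊕ ℕ := Sum.map Fin.val Fin.val
  have hf : Injective f := Fin.val_injective.sumMap Fin.val_injective
  have hE : ∀ x y, TnE (n + 1) x y → TinfE (f x) (f y) := fun x y ↦ (tnE_iff_tinfE _ x y).mp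
  obtain ⟨e₁, e₂⟩ := TinfE.eq_of_isPathFrom_of_disjoint (d := n) (lo := 0)
    (by simpa [f] using h₁.map hf hE) (by simpa [f] using h₂.map hf hE)
    (List.disjoint_map hf fun _ h h' ↦ hdisj _ h h') (fun _ _ ↦ Nat.zero_le _)
  have hrange : (List.finRange (n + 1)).map Fin.val = List.range' 0 (n + 1) := by
    rw [List.map_coe_finRange_eq_range, List.range_eq_range']
  refine ⟨List.map_injective_iff.mpr hf ?_, List.map_injective_iff.mpr hf ?_⟩
  · rw [e₁, ← hrange, List.map_map, List.map_map]; rfl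
  · rw [e₂, ← hrange]; simp only [List.map_map, List.map_reverse]; rfl
end
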